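/- arXiv:1606.06438 — 10 statements merged into one kernel-verified Lean document; each statement's English description precedes it below -/
import Mathlib

section
/- Let M be a symmetric irreducible real n×n matrix with positive diagonal, nonpositive off-diagonal entries, and zero row sums. Then the (n−1)×(n−1) submatrix M̃ obtained by deleting the first row and first column of M is symmetric positive definite. -/
/-!
For a symmetric matrix `M` with zero row sums, `2 yᵀ M y = ∑ᵢⱼ (-Mᵢⱼ) (yᵢ - yⱼ)²`. With
nonpositive off-diagonal entries every summand is nonnegative, so the form vanishes only if
`y` is constant along every edge `Mᵢⱼ ≠ 0`, hence, by irreducibility, constant. On vectors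
with `y₀ = 0`, which carry the quadratic form of `M.submatrix succ succ`, it is therefore
positive definite.
-/

open Matrix

namespace Matrix

variable {ι : Type*} {M : Matrix ι ι ℝ}

theorem two_mul_dotProduct_mulVec_eq_sum_sq_sub [Fintype ι] {R : Type*} [CommRing R]
    {M : Matrix ι ι R} (hsym : M.IsSymm) (hrow : ∀ i, ∑ j, M i j = 0) (y : ι → R) :
    2 * (y ⬝ᵥ M *ᵥ y) = ∑ i, ∑ j, -M i j * (y i - y j) ^ 2 := by
  have hcol : ∀ j, ∑ i, M i j = 0 := fun j => by
    simpa only [hsym.apply] using hrow j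
  have hrow_sq : ∑ i, ∑ j, M i j * y i ^ 2 = 0 := by
    simp only [← Finset.sum_mul, hrow, zero_mul, Finset.sum_const_zero]
  have hcol_sq : ∑ i, ∑ j, M i j * y j ^ 2 = 0 := by
    rw [Finset.sum_comm]
    simp only [← Finset.sum_mul, hcol, zero_mul, Finset.sum_const_zero]
  calc 2 * (y ⬝ᵥ M *ᵥ y)
      = ∑ i, ∑ j, 2 * (M i j * (y i * y j)) - ∑ i, ∑ j, M i j * y i ^ 2
          - ∑ i, ∑ j, M i j * y j ^ 2 := by
        simp only [hrow_sq, hcol_sq, sub_zero, dotProduct, mulVec, Finset.mul_sum]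
        exact Finset.sum_congr rfl fun i _ => Finset.sum_congr rfl fun j _ => by ring
    _ = ∑ i, ∑ j, -M i j * (y i - y j) ^ 2 := by
        simp only [← Finset.sum_sub_distrib]
        exact Finset.sum_congr rfl fun i _ => Finset.sum_congr rfl fun j _ => by ring

theorem neg_mul_sq_sub_nonneg (hoff : ∀ i j, i ≠ j → M i j ≤ 0) (y : ι → ℝ) (i j : ι) :
    0 ≤ -M i j * (y i - y j) ^ 2 := by
  rcases eq_or_ne i j with rfl | hij
  · simp
  · exact mul_nonneg (neg_nonneg.mpr (hoff i j hij)) (sq_nonneg _)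

variable [Fintype ι]

theorem dotProduct_mulVec_self_nonneg (hsym : M.IsSymm) (hoff : ∀ i j, i ≠ j → M i j ≤ 0)
    (hrow : ∀ i, ∑ j, M i j = 0) (y : ι → ℝ) : 0 ≤ y ⬝ᵥ M *ᵥ y := by
  have hsum : 0 ≤ ∑ i, ∑ j, -M i j * (y i - y j) ^ 2 :=
    Finset.sum_nonneg fun i _ => Finset.sum_nonneg fun j _ => neg_mul_sq_sub_nonneg hoff y i j
  linarith [two_mul_dotProduct_mulVec_eq_sum_sq_sub hsym hrow y]

theorem eq_of_dotProduct_mulVec_self_eq_zero (hsym : M.IsSymm)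
    (hoff : ∀ i j, i ≠ j → M i j ≤ 0) (hrow : ∀ i, ∑ j, M i j = 0) {y : ι → ℝ}
    (hy : y ⬝ᵥ M *ᵥ y = 0) {a b : ι} (hab : Relation.TransGen (fun a b => M a b ≠ 0) a b) :
    y a = y b := by
  have hsum : ∑ i, ∑ j, -M i j * (y i - y j) ^ 2 = 0 := by
    rw [← two_mul_dotProduct_mulVec_eq_sum_sq_sub hsym hrow y, hy, mul_zero]
  have hrows := (Fintype.sum_eq_zero_iff_of_nonneg fun i =>
    Finset.sum_nonneg fun j _ => neg_mul_sq_sub_nonneg hoff y i j).mp hsum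
  have hterm (i j : ι) : -M i j * (y i - y j) ^ 2 = 0 :=
    congr_fun ((Fintype.sum_eq_zero_iff_of_nonneg (neg_mul_sq_sub_nonneg hoff y i)).mp
      (congr_fun hrows i)) j
  have hedge (a b : ι) (hab : M a b ≠ 0) : y a = y b := by
    simpa [hab, sub_eq_zero] using hterm a b
  induction hab with
  | single h => exact hedge _ _ h
  | tail _ h ih => exact ih.trans (hedge _ _ h)

theorem dotProduct_mulVec_self_pos (hsym : M.IsSymm) (hoff : ∀ i j, i ≠ j → M i j ≤ 0)
    (hrow : ∀ i, ∑ j, M i j = 0)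
    (hirr : ∀ i j, i ≠ j → Relation.TransGen (fun a b => M a b ≠ 0) i j)
    {y : ι → ℝ} {i₀ : ι} (hy₀ : y i₀ = 0) (hy : y ≠ 0) : 0 < y ⬝ᵥ M *ᵥ y := by
  refine (dotProduct_mulVec_self_nonneg hsym hoff hrow y).lt_of_ne' fun hzero => hy ?_
  funext i
  rcases eq_or_ne i i₀ with rfl | hi
  · exact hy₀
  · rw [eq_of_dotProduct_mulVec_self_eq_zero hsym hoff hrow hzero (hirr i i₀ hi), hy₀,
      Pi.zero_apply]

theorem dotProduct_mulVec_submatrix_succ {n : ℕ} {R : Type*} [CommRing R]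
    (M : Matrix (Fin (n + 1)) (Fin (n + 1)) R) (x : Fin n → R) :
    x ⬝ᵥ M.submatrix Fin.succ Fin.succ *ᵥ x = vecCons 0 x ⬝ᵥ M *ᵥ vecCons 0 x := by
  simp [dotProduct, mulVec, Fin.sum_univ_succ]

end Matrix

theorem mrmt_stmt2_general {n : ℕ} (M : Matrix (Fin (n + 2)) (Fin (n + 2)) ℝ)
    (hMsym : M.IsSymm)
    (hMirr : ∀ i j : Fin (n + 2), i ≠ j → Relation.TransGen (fun a b => M a b ≠ 0) i j)
    (hMoff : ∀ i j, i ≠ j → M i j ≤ 0)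
    (hMrow : ∀ i, ∑ j, M i j = 0) :
    (M.submatrix Fin.succ Fin.succ).PosDef := by
  refine .of_dotProduct_mulVec_pos (isHermitian_iff_isSymm.mpr (hMsym.submatrix _))
    fun x hx => ?_
  rw [star_trivial, dotProduct_mulVec_submatrix_succ]
  exact dotProduct_mulVec_self_pos hMsym hMoff hMrow hMirr (cons_val_zero 0 x)
    (cons_nonzero_iff.mpr (.inr hx))

/-- the submatrix of M obtained by deleting the first row and column
is symmetric positive definite. -/
theorem mrmt_stmt2 {n : ℕ} (M : Matrix (Fin (n + 2)) (Fin (n + 2)) ℝ)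
    (hMsym : M.IsSymm)
    (hMirr : ∀ i j : Fin (n + 2), i ≠ j → Relation.TransGen (fun a b => M a b ≠ 0) i j)
    (hMdiag : ∀ i, 0 < M i i)
    (hMoff : ∀ i j, i ≠ j → M i j ≤ 0)
    (hMrow : ∀ i, ∑ j, M i j = 0) :
    (M.submatrix Fin.succ Fin.succ).PosDef :=
  mrmt_stmt2_general M hMsym hMirr hMoff hMrow
end

section
/- Let A = -BBᵗ - V⁻¹M with B = e₁, V positive diagonal, and M symmetric irreducible with positive diagonal, nonpositive off-diagonal entries, and zero row sums. Then A is invertible, and for any constant scalar u the unique equilibrium of Ẋ = AX + Bu is X* = u·𝟙, where 𝟙 is the all-ones vector. -/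
open Matrix

lemma quad_form_eq {n : ℕ} (M : Matrix (Fin n) (Fin n) ℝ) (hMsym : M.IsSymm)
    (hMrow : ∀ i, ∑ j, M i j = 0) (X : Fin n → ℝ) :
    ∑ i, ∑ j, M i j * X i * X j = -(1/2) * ∑ i, ∑ j, M i j * (X i - X j)^2 := by
  have hcol : ∀ j, ∑ i, M i j = 0 := by
    intro j
    rw [Finset.sum_congr rfl fun i _ => (hMsym.apply i j).symm]
    exact hMrow j
  have h1 : ∑ i : Fin n, ∑ j : Fin n, M i j * X i ^ 2 = 0 := by
    refine Finset.sum_eq_zero fun i _ => ?_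
    rw [← Finset.sum_mul, hMrow, zero_mul]
  have h2 : ∑ i : Fin n, ∑ j : Fin n, M i j * X j ^ 2 = 0 := by
    rw [Finset.sum_comm]
    refine Finset.sum_eq_zero fun j _ => ?_
    rw [← Finset.sum_mul, hcol, zero_mul]
  have hexp : ∑ i : Fin n, ∑ j : Fin n, M i j * (X i - X j)^2
      = ∑ i : Fin n, ∑ j : Fin n,
        (M i j * X i ^ 2 + M i j * X j ^ 2 - 2 * (M i j * X i * X j)) :=
    Finset.sum_congr rfl fun i _ => Finset.sum_congr rfl fun j _ => by ring
  have hsplit : ∑ i : Fin n, ∑ j : Fin n,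
        (M i j * X i ^ 2 + M i j * X j ^ 2 - 2 * (M i j * X i * X j))
      = (∑ i : Fin n, ∑ j : Fin n, M i j * X i ^ 2)
        + (∑ i : Fin n, ∑ j : Fin n, M i j * X j ^ 2)
        - 2 * ∑ i : Fin n, ∑ j : Fin n, M i j * X i * X j := by
    simp [Finset.sum_add_distrib, Finset.sum_sub_distrib, Finset.mul_sum]
  rw [hexp, hsplit, h1, h2]
  ring

/-- A is invertible and, for any constant control u, the unique
equilibrium of Ẋ = AX + Bu is the all-ones vector scaled by u. -/
theorem mrmt_stmt3 {n : ℕ} (hn : 0 < n) (v : Fin n → ℝ)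
    (M A : Matrix (Fin n) (Fin n) ℝ) (B : Fin n → ℝ)
    (hB : B = Pi.single ⟨0, hn⟩ 1)
    (hv : ∀ i, 0 < v i)
    (hMsym : M.IsSymm)
    (hMirr : ∀ i j : Fin n, i ≠ j → Relation.TransGen (fun a b => M a b ≠ 0) i j)
    (hMdiag : ∀ i, 0 < M i i)
    (hMoff : ∀ i j, i ≠ j → M i j ≤ 0)
    (hMrow : ∀ i, ∑ j, M i j = 0)
    (hA : A = -(vecMulVec B B) - (Matrix.diagonal v)⁻¹ * M) :
    IsUnit A.det ∧
      ∀ u : ℝ, ∀ X : Fin n → ℝ, (A *ᵥ X + u • B = 0 ↔ X = fun _ => u) := by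
  set i0 : Fin n := ⟨0, hn⟩ with hi0
  have hvne : ∀ i, v i ≠ 0 := fun i => (hv i).ne'
  -- entrywise description of A
  have hAij : ∀ i j, A i j = -(B i * B j) - (v i)⁻¹ * M i j := by
    intro i j
    have hdinv : (Matrix.diagonal v)⁻¹ = Matrix.diagonal (fun i => (v i)⁻¹) := by
      apply Matrix.inv_eq_right_inv
      rw [Matrix.diagonal_mul_diagonal]
      convert Matrix.diagonal_one
      exact mul_inv_cancel₀ (hvne _)
    rw [hA]
    simp [vecMulVec_apply, hdinv, Matrix.mul_apply, Matrix.diagonal_apply,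
      Finset.sum_ite_eq, ite_mul]
  -- A applied to a vector, entrywise
  have hAmul : ∀ (X : Fin n → ℝ) (i : Fin n),
      (A *ᵥ X) i = -(B i * X i0) - (v i)⁻¹ * ∑ j, M i j * X j := by
    intro X i
    have hBdot : ∑ j, B j * X j = X i0 := by
      simp [hB, Pi.single_apply]
    simp only [mulVec, dotProduct, hAij]
    have hterm : ∀ j, (-(B i * B j) - (v i)⁻¹ * M i j) * X j
        = -(B i * (B j * X j)) + (-((v i)⁻¹ * (M i j * X j))) := fun j => by ring
    rw [Finset.sum_congr rfl fun j _ => hterm j, Finset.sum_add_distrib,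
      Finset.sum_neg_distrib, Finset.sum_neg_distrib, ← Finset.mul_sum,
      ← Finset.mul_sum, hBdot]
    ring
  -- the kernel of A is trivial
  have hker : ∀ X : Fin n → ℝ, A *ᵥ X = 0 → X = 0 := by
    intro X hX
    -- M *ᵥ X entrywise from the kernel equation
    have hMX : ∀ i, ∑ j, M i j * X j = -(v i * (B i * X i0)) := by
      intro i
      have h := congrFun hX i
      rw [hAmul X i] at h
      have h' : (v i)⁻¹ * ∑ j, M i j * X j = -(B i * X i0) := by
        simp only [Pi.zero_apply] at h; linarith
      have := congrArg (fun t => v i * t) h'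
      simpa [mul_assoc, mul_comm, mul_left_comm, hvne i, inv_mul_cancel_left₀,
        mul_neg] using this
    -- quadratic form value
    have hquadval : ∑ i, ∑ j, M i j * X i * X j = -(v i0 * X i0 ^ 2) := by
      have : ∀ i, ∑ j, M i j * X i * X j = X i * ∑ j, M i j * X j := by
        intro i
        rw [Finset.mul_sum]
        exact Finset.sum_congr rfl fun j _ => by ring
      rw [Finset.sum_congr rfl fun i _ => this i]
      simp_rw [hMX]
      rw [hB]
      rw [Finset.sum_eq_single i0]
      · simp [hi0]; ring
      · intro b _ hb
        simp [Pi.single_apply, hb]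
      · intro h; exact absurd (Finset.mem_univ i0) h
    have hquad := quad_form_eq M hMsym hMrow X
    -- each summand M i j * (X i - X j)^2 is nonpositive
    have hterm_nonpos : ∀ i j : Fin n, M i j * (X i - X j)^2 ≤ 0 := by
      intro i j
      rcases eq_or_ne i j with rfl | hij
      · simp
      · exact mul_nonpos_of_nonpos_of_nonneg (hMoff i j hij) (sq_nonneg _)
    have hsum_nonpos : ∑ i : Fin n, ∑ j : Fin n, M i j * (X i - X j)^2 ≤ 0 :=
      Finset.sum_nonpos fun i _ => Finset.sum_nonpos fun j _ => hterm_nonpos i j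
    -- the quadratic form is nonneg, but equals -(v i0 * X i0 ^ 2) ≤ 0
    have hq_nonneg : 0 ≤ ∑ i, ∑ j, M i j * X i * X j := by
      rw [hquad]; nlinarith
    have hXi0 : X i0 = 0 := by
      have h1 : -(v i0 * X i0 ^ 2) ≥ 0 := hquadval ▸ hq_nonneg
      have h2 : 0 < v i0 := hv i0
      have hsq : X i0 ^ 2 = 0 := le_antisymm (by nlinarith) (sq_nonneg _)
      exact pow_eq_zero_iff (n := 2) (by norm_num) |>.mp hsq
    have hq_zero : ∑ i : Fin n, ∑ j : Fin n, M i j * (X i - X j)^2 = 0 := by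
      have : ∑ i, ∑ j, M i j * X i * X j = 0 := by rw [hquadval, hXi0]; ring
      rw [this] at hquad
      linarith
    have hterm_zero : ∀ i j : Fin n, M i j * (X i - X j)^2 = 0 := by
      intro i j
      have h1 := (Finset.sum_eq_zero_iff_of_nonpos
        (fun i _ => Finset.sum_nonpos fun j _ => hterm_nonpos i j)).mp hq_zero
        i (Finset.mem_univ i)
      exact (Finset.sum_eq_zero_iff_of_nonpos
        (fun j _ => hterm_nonpos i j)).mp h1 j (Finset.mem_univ j)
    have hstep : ∀ i j : Fin n, M i j ≠ 0 → X i = X j := by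
      intro i j hij
      have := hterm_zero i j
      have h2 : (X i - X j)^2 = 0 := by
        rcases mul_eq_zero.mp this with h | h
        · exact absurd h hij
        · exact h
      have := pow_eq_zero_iff (n := 2) (by norm_num) |>.mp h2
      linarith
    have htg : ∀ i j : Fin n, Relation.TransGen (fun a b => M a b ≠ 0) i j → X i = X j := by
      intro i j h
      induction h with
      | single hab => exact hstep _ _ hab
      | tail _ hbc ih => exact ih.trans (hstep _ _ hbc)
    have hconst : ∀ i j : Fin n, X i = X j := by
      intro i j
      rcases eq_or_ne i j with rfl | hij
      · rfl
      · exact htg i j (hMirr i j hij)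
    funext i
    rw [Pi.zero_apply, ← hXi0]
    exact hconst i i0
  -- invertibility
  have hdet : IsUnit A.det := by
    rw [isUnit_iff_ne_zero]
    intro h
    obtain ⟨w, hw, hw0⟩ := (Matrix.exists_mulVec_eq_zero_iff).mpr h
    exact hw (hker w hw0)
  refine ⟨hdet, ?_⟩
  intro u X
  -- A *ᵥ (constant u) = -(u • B)
  have hAone : A *ᵥ (fun _ => u) = -(u • B) := by
    funext i
    rw [hAmul]
    have : ∑ j, M i j * u = 0 := by
      rw [← Finset.sum_mul, hMrow, zero_mul]
    rw [this]
    simp [hB, Pi.single_apply, mul_comm]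
  constructor
  · intro h
    have hdiff : A *ᵥ (X - fun _ => u) = 0 := by
      rw [Matrix.mulVec_sub, hAone]
      funext i
      have := congrFun h i
      simp only [Pi.add_apply, Pi.zero_apply] at this
      simp only [Pi.sub_apply, Pi.neg_apply, Pi.smul_apply, Pi.zero_apply,
        smul_eq_mul]
      simp only [Pi.smul_apply, smul_eq_mul] at this
      linarith
    have := hker _ hdiff
    funext i
    have := congrFun this i
    simp only [Pi.sub_apply, Pi.zero_apply] at this
    linarith
  · rintro rfl
    rw [hAone]
    simp
end

section
/- Under the structural assumptions on A (A = -BBᵗ - V⁻¹M, V positive diagonal, M symmetric irreducible with positive diagonal, nonpositive off-diagonal, zero row sums), the submatrix Ã = (Aᵢⱼ)_{2≤i,j≤n} is diagonalizable over ℝ and all of its eigenvalues are real and strictly negative. -/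
/-!
`M` is the Laplacian of a connected weighted graph, so `xᵀ M x = ½ ∑ᵢⱼ (-Mᵢⱼ)(xᵢ - xⱼ)²`
vanishes only on constant vectors; hence the grounded Laplacian `M̃` is positive definite.
Since `B = e₀`, the matrix `Ã` is `-D M̃` with `D = Ṽ⁻¹` positive diagonal, and `D M̃` is
similar, through `D^{1/2}`, to the positive definite matrix `D^{1/2} M̃ D^{1/2}`, which the
spectral theorem diagonalizes.
-/

open Matrix

section Laplacian

variable {ι : Type*} [Fintype ι] {M : Matrix ι ι ℝ}

theorem dotProduct_mulVec_eq_neg_sum_mul_sub_sq (hsym : M.IsSymm) (hrow : ∀ i, ∑ j, M i j = 0)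
    (x : ι → ℝ) : x ⬝ᵥ (M *ᵥ x) = -(∑ i, ∑ j, M i j * (x i - x j) ^ 2) / 2 := by
  have hleft : ∑ i, ∑ j, M i j * x i ^ 2 = 0 := by
    simp [← Finset.sum_mul, hrow]
  have hright : ∑ i, ∑ j, M i j * x j ^ 2 = 0 := by
    rw [Finset.sum_comm]
    simp [← Finset.sum_mul, hsym.apply, hrow]
  have hexpand : ∑ i, ∑ j, M i j * (x i - x j) ^ 2
      = ∑ i, ∑ j, M i j * x i ^ 2 - 2 * ∑ i, x i * ∑ j, M i j * x j
        + ∑ i, ∑ j, M i j * x j ^ 2 := by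
    simp only [Finset.mul_sum, ← Finset.sum_sub_distrib, ← Finset.sum_add_distrib]
    exact Finset.sum_congr rfl fun i _ => Finset.sum_congr rfl fun j _ => by ring
  rw [hexpand, hleft, hright]
  simp only [dotProduct, mulVec]
  ring

theorem eq_of_dotProduct_mulVec_nonpos (hsym : M.IsSymm) (hrow : ∀ i, ∑ j, M i j = 0)
    (hoff : ∀ i j, i ≠ j → M i j ≤ 0) {x : ι → ℝ} (hx : x ⬝ᵥ (M *ᵥ x) ≤ 0) {i j : ι}
    (hij : Relation.TransGen (fun a b => M a b ≠ 0) i j) : x i = x j := by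
  have hterm : ∀ a b, M a b * (x a - x b) ^ 2 ≤ 0 := fun a b => by
    rcases eq_or_ne a b with rfl | hab
    · simp
    · exact mul_nonpos_of_nonpos_of_nonneg (hoff a b hab) (sq_nonneg _)
  have hsum : ∑ a, ∑ b, M a b * (x a - x b) ^ 2 = 0 := by
    rw [dotProduct_mulVec_eq_neg_sum_mul_sub_sq hsym hrow] at hx
    exact le_antisymm (Finset.sum_nonpos fun a _ => Finset.sum_nonpos fun b _ => hterm a b)
      (by linarith)
  have hzero : ∀ a b, M a b * (x a - x b) ^ 2 = 0 := fun a b =>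
    (Finset.sum_eq_zero_iff_of_nonpos fun b _ => hterm a b).1
      ((Finset.sum_eq_zero_iff_of_nonpos fun a _ =>
        Finset.sum_nonpos fun b _ => hterm a b).1 hsum a (Finset.mem_univ a)) b
      (Finset.mem_univ b)
  have hedge : ∀ a b, M a b ≠ 0 → x a = x b := fun a b hab =>
    sub_eq_zero.1 <| pow_eq_zero_iff two_ne_zero |>.1 <|
      (mul_eq_zero.1 (hzero a b)).resolve_left hab
  induction hij with
  | single hab => exact hedge _ _ hab
  | tail _ hbc ih => exact ih.trans (hedge _ _ hbc)

theorem posDef_submatrix_of_connected (hsym : M.IsSymm) (hrow : ∀ i, ∑ j, M i j = 0)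
    (hoff : ∀ i j, i ≠ j → M i j ≤ 0) {r : ι}
    (hconn : ∀ i, i ≠ r → Relation.TransGen (fun a b => M a b ≠ 0) i r)
    {κ : Type*} [Fintype κ] {e : κ → ι} (he : Function.Injective e) (hr : ∀ k, e k ≠ r) :
    (M.submatrix e e).PosDef := by
  refine PosDef.of_dotProduct_mulVec_pos (isHermitian_iff_isSymm.2 (hsym.submatrix e))
    fun x hx => ?_
  set y : ι → ℝ := Function.extend e x (0 : ι → ℝ)
  have hy : ∀ k, y (e k) = x k := he.extend_apply x 0
  have hy0 : ∀ i ∉ Set.range e, y i = 0 := fun i hi => Function.extend_apply' x _ i hi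
  have hquad : star x ⬝ᵥ (M.submatrix e e *ᵥ x) = y ⬝ᵥ (M *ᵥ y) := by
    simp only [star_trivial, dotProduct, mulVec, submatrix_apply]
    refine Fintype.sum_of_injective e he _ (fun i => y i * ∑ j, M i j * y j)
      (fun i hi => by rw [hy0 i hi, zero_mul]) fun k => ?_
    rw [hy, Fintype.sum_of_injective e he _ (fun j => M (e k) j * y j)
      (fun j hj => by rw [hy0 j hj, mul_zero]) fun l => by rw [hy]]
  rw [hquad]
  by_contra! hnonpos
  refine hx (funext fun k => ?_)
  rw [← hy, eq_of_dotProduct_mulVec_nonpos hsym hrow hoff hnonpos (hconn (e k) (hr k)),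
    hy0 r (fun ⟨k, hk⟩ => hr k hk), Pi.zero_apply]

end Laplacian

theorem Matrix.PosDef.exists_eq_mul_diagonal_mul_star {κ : Type*} [Fintype κ] [DecidableEq κ]
    {N : Matrix κ κ ℝ} (hN : N.PosDef) :
    ∃ (U : Matrix κ κ ℝ) (μ : κ → ℝ),
      star U * U = 1 ∧ N = U * diagonal μ * star U ∧ ∀ i, 0 < μ i :=
  ⟨hN.1.eigenvectorUnitary, hN.1.eigenvalues, Unitary.coe_star_mul_self _,
    by simpa using hN.1.spectral_theorem, hN.eigenvalues_pos⟩

theorem exists_diagonalization_diagonal_mul_posDef {κ : Type*} [Fintype κ] [DecidableEq κ]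
    {d : κ → ℝ} (hd : ∀ i, 0 < d i) {N : Matrix κ κ ℝ} (hN : N.PosDef) :
    ∃ (P : Matrix κ κ ℝ) (μ : κ → ℝ), IsUnit P.det ∧
      P⁻¹ * (diagonal d * N) * P = diagonal μ ∧ ∀ i, 0 < μ i := by
  set S : Matrix κ κ ℝ := diagonal fun i => √(d i)
  have hSS : S * S = diagonal d := by
    simp only [S, diagonal_mul_diagonal, Real.mul_self_sqrt (hd _).le]
  have hS : IsUnit S := by
    simpa [S, isUnit_diagonal, Pi.isUnit_iff] using fun i => (Real.sqrt_pos.2 (hd i)).ne'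
  have hSN : (S * N * S).PosDef := by
    simpa [S] using hN.conjTranspose_mul_mul_same (B := S) (mulVec_injective_iff_isUnit.2 hS)
  obtain ⟨U, μ, hUU, hspec, hμ⟩ := hSN.exists_eq_mul_diagonal_mul_star
  have hP : IsUnit (S * U).det := by
    rw [det_mul]
    exact ((isUnit_iff_isUnit_det S).1 hS).mul (isUnit_det_of_left_inverse hUU)
  refine ⟨S * U, μ, hP, ?_, hμ⟩
  have hintertwine : diagonal d * N * (S * U) = S * U * diagonal μ := by
    calc diagonal d * N * (S * U) = S * (S * N * S) * U := by rw [← hSS]; noncomm_ring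
      _ = S * U * diagonal μ * (star U * U) := by rw [hspec]; noncomm_ring
      _ = S * U * diagonal μ := by rw [hUU, Matrix.mul_one]
  rw [Matrix.mul_assoc, hintertwine, ← Matrix.mul_assoc, nonsing_inv_mul _ hP, Matrix.one_mul]

theorem mrmt_stmt4_general {n : ℕ} (v : Fin (n + 1) → ℝ)
    (M A : Matrix (Fin (n + 1)) (Fin (n + 1)) ℝ) (B : Fin (n + 1) → ℝ)
    (hB : B = Pi.single 0 1)
    (hv : ∀ i, 0 < v i)
    (hMsym : M.IsSymm)
    (hMirr : ∀ i j : Fin (n + 1), i ≠ j → Relation.TransGen (fun a b => M a b ≠ 0) i j)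
    (hMoff : ∀ i j, i ≠ j → M i j ≤ 0)
    (hMrow : ∀ i, ∑ j, M i j = 0)
    (hA : A = -(vecMulVec B B) - (Matrix.diagonal v)⁻¹ * M) :
    ∃ (P : Matrix (Fin n) (Fin n) ℝ) (d : Fin n → ℝ),
      IsUnit P.det ∧
      P⁻¹ * (A.submatrix Fin.succ Fin.succ) * P = Matrix.diagonal d ∧
      ∀ i, d i < 0 := by
  have hAsub : A.submatrix Fin.succ Fin.succ
      = -(diagonal (fun i => (v i.succ)⁻¹) * M.submatrix Fin.succ Fin.succ) := by
    have hvunit : IsUnit v := Pi.isUnit_iff.2 fun i => (hv i).ne'.isUnit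
    ext i j
    simp [hA, hB, inv_diagonal, diagonal_mul, Ring.inverse, hvunit, vecMulVec_apply,
      Fin.succ_ne_zero]
  have hMsub : (M.submatrix Fin.succ Fin.succ).PosDef :=
    posDef_submatrix_of_connected hMsym hMrow hMoff (fun i hi => hMirr i 0 hi)
      (Fin.succ_injective n) Fin.succ_ne_zero
  obtain ⟨P, μ, hP, hPμ, hμ⟩ :=
    exists_diagonalization_diagonal_mul_posDef (fun i => inv_pos.2 (hv i.succ)) hMsub
  refine ⟨P, -μ, hP, ?_, fun i => neg_neg_of_pos (hμ i)⟩
  rw [hAsub, Matrix.mul_neg, Matrix.neg_mul, hPμ, diagonal_neg]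
  rfl

/-- under the structural assumptions, the submatrix Ã (deleting the
first row and column of A) is diagonalizable over ℝ with strictly negative
eigenvalues. -/
theorem mrmt_stmt4 {n : ℕ} (v : Fin (n + 1) → ℝ)
    (M A : Matrix (Fin (n + 1)) (Fin (n + 1)) ℝ) (B : Fin (n + 1) → ℝ)
    (hB : B = Pi.single 0 1)
    (hv : ∀ i, 0 < v i)
    (hMsym : M.IsSymm)
    (hMirr : ∀ i j : Fin (n + 1), i ≠ j → Relation.TransGen (fun a b => M a b ≠ 0) i j)
    (hMdiag : ∀ i, 0 < M i i)
    (hMoff : ∀ i j, i ≠ j → M i j ≤ 0)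
    (hMrow : ∀ i, ∑ j, M i j = 0)
    (hA : A = -(vecMulVec B B) - (Matrix.diagonal v)⁻¹ * M) :
    ∃ (P : Matrix (Fin n) (Fin n) ℝ) (d : Fin n → ℝ),
      IsUnit P.det ∧
      P⁻¹ * (A.submatrix Fin.succ Fin.succ) * P = Matrix.diagonal d ∧
      ∀ i, d i < 0 :=
  mrmt_stmt4_general v M A B hB hv hMsym hMirr hMoff hMrow hA
end

section
/- Let A = -BBᵗ - V⁻¹M with B = e₁, V positive diagonal with V₁₁ = 1, M symmetric, and C = e₁ᵗ. Then the pair (A,B) is controllable if and only if the pair (A,C) is observable, i.e., the controllability matrix [B, AB, …, A^{n-1}B] has rank n if and only if the observability matrix with rows C, CA, …, CA^{n-1} has rank n. -/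
open Matrix

/-- with B = C = e₁, V positive diagonal with V₁₁ = 1 and M symmetric,
(A,B) is controllable iff (A,C) is observable. -/
theorem mrmt_stmt6 {n : ℕ} (v : Fin (n + 1) → ℝ) (hv : ∀ i, 0 < v i)
    (hv0 : v 0 = 1)
    (M A : Matrix (Fin (n + 1)) (Fin (n + 1)) ℝ)
    (hMsym : M.IsSymm)
    (B C : Fin (n + 1) → ℝ) (hB : B = Pi.single 0 1) (hC : C = Pi.single 0 1)
    (hA : A = -(vecMulVec B B) - (Matrix.diagonal v)⁻¹ * M) :
    (Matrix.of fun i (k : Fin (n + 1)) => ((A ^ (k : ℕ)) *ᵥ B) i).rank = n + 1 ↔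
      (Matrix.of fun (k : Fin (n + 1)) i => (C ᵥ* (A ^ (k : ℕ))) i).rank = n + 1 := by
  set V : Matrix (Fin (n + 1)) (Fin (n + 1)) ℝ := Matrix.diagonal v with hV
  have hdet : IsUnit V.det := by
    rw [hV, Matrix.det_diagonal]
    exact (Finset.prod_pos (fun i _ => hv i)).ne'.isUnit
  have hVinv : V * V⁻¹ = 1 := Matrix.mul_nonsing_inv V hdet
  have hVB : V *ᵥ B = B := by
    funext i
    rw [hV, Matrix.mulVec_diagonal, hB]
    rcases eq_or_ne i 0 with h | h
    · simp [h, hv0]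
    · simp [Pi.single_eq_of_ne h]
  have hVbb : V * vecMulVec B B = vecMulVec B B := by
    ext i j
    rcases eq_or_ne i 0 with h | h
    · simp [hV, Matrix.diagonal_mul, Matrix.vecMulVec_apply, h, hv0]
    · simp [hV, Matrix.diagonal_mul, Matrix.vecMulVec_apply, hB, Pi.single_eq_of_ne h]
  have hVA : V * A = -(vecMulVec B B) - M := by
    rw [hA, Matrix.mul_sub, Matrix.mul_neg, hVbb, ← Matrix.mul_assoc, hVinv, Matrix.one_mul]
  have hbbT : (vecMulVec B B)ᵀ = vecMulVec B B := by
    ext i j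
    simp [Matrix.vecMulVec_apply, mul_comm]
  have hVAsym : (V * A)ᵀ = V * A := by
    rw [hVA, Matrix.transpose_sub, Matrix.transpose_neg, hbbT, hMsym.eq]
  have hAT : Aᵀ * V = V * A := by
    calc Aᵀ * V = Aᵀ * Vᵀ := by rw [hV, Matrix.diagonal_transpose]
    _ = (V * A)ᵀ := (Matrix.transpose_mul V A).symm
    _ = V * A := hVAsym
  have hpow : ∀ k : ℕ, (Aᵀ) ^ k * V = V * A ^ k := by
    intro k
    induction k with
    | zero => simp
    | succ k ih =>
        rw [pow_succ', Matrix.mul_assoc, ih, ← Matrix.mul_assoc, hAT, Matrix.mul_assoc,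
          ← pow_succ']
  have key : ∀ k : ℕ, C ᵥ* A ^ k = V *ᵥ (A ^ k *ᵥ B) := by
    intro k
    have : C ᵥ* A ^ k = (A ^ k)ᵀ *ᵥ C := by
      funext i; simp [Matrix.vecMul, Matrix.mulVec, dotProduct, mul_comm]
    rw [this, Matrix.transpose_pow, hC.trans (hB.symm.trans (hVB.symm)),
      Matrix.mulVec_mulVec, hpow, ← Matrix.mulVec_mulVec]
  have hO : (Matrix.of fun (k : Fin (n + 1)) i => (C ᵥ* (A ^ (k : ℕ))) i) =
      (Matrix.of fun i (k : Fin (n + 1)) => ((A ^ (k : ℕ)) *ᵥ B) i)ᵀ * V := by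
    ext k i
    simp only [Matrix.of_apply, Matrix.transpose_apply, hV, Matrix.mul_diagonal]
    rw [key, hV, Matrix.mulVec_diagonal, mul_comm]
  rw [hO, Matrix.rank_mul_eq_left_of_isUnit_det V _ hdet, Matrix.rank_transpose]
end

section
/- For A satisfying the structural assumptions with V₁₁ = 1, the observability matrix satisfies O_{A,C}ᵗ = V · C_{A,B}, where C_{A,B} is the controllability matrix; in particular rank(O_{A,C}) = rank(C_{A,B}). -/
open Matrix

/-- with V₁₁ = 1, the transpose of the observability matrix equals
V times the controllability matrix; in particular their ranks coincide. -/
theorem mrmt_stmt7 {n : ℕ} (v : Fin (n + 1) → ℝ) (hv : ∀ i, 0 < v i)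
    (hv0 : v 0 = 1)
    (M A : Matrix (Fin (n + 1)) (Fin (n + 1)) ℝ)
    (hMsym : M.IsSymm)
    (B C : Fin (n + 1) → ℝ) (hB : B = Pi.single 0 1) (hC : C = Pi.single 0 1)
    (hA : A = -(vecMulVec B B) - (Matrix.diagonal v)⁻¹ * M) :
    (Matrix.of fun (k : Fin (n + 1)) i => (C ᵥ* (A ^ (k : ℕ))) i)ᵀ =
        Matrix.diagonal v * (Matrix.of fun i (k : Fin (n + 1)) => ((A ^ (k : ℕ)) *ᵥ B) i) ∧
      (Matrix.of fun (k : Fin (n + 1)) i => (C ᵥ* (A ^ (k : ℕ))) i).rank =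
        (Matrix.of fun i (k : Fin (n + 1)) => ((A ^ (k : ℕ)) *ᵥ B) i).rank := by
  set D := Matrix.diagonal v with hD
  have hdet : IsUnit D.det := by
    rw [hD, Matrix.det_diagonal]
    exact isUnit_iff_ne_zero.mpr (Finset.prod_ne_zero_iff.mpr fun i _ => (hv i).ne')
  have hDX : D * vecMulVec B B = vecMulVec B B := by
    ext i j
    rw [hD, Matrix.diagonal_mul]
    rcases eq_or_ne i 0 with h | h
    · subst h; rw [hv0, one_mul]
    · rw [hB]; simp [Matrix.vecMulVec_apply, Pi.single_eq_of_ne h]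
  have hsym : D * A = -(vecMulVec B B) - M := by
    rw [hA, mul_sub, mul_neg, hDX, Matrix.mul_nonsing_inv_cancel_left _ _ hdet]
  have hXT : (vecMulVec B B)ᵀ = vecMulVec B B := by
    ext i j; simp [Matrix.vecMulVec_apply, mul_comm]
  have h1 : Aᵀ * D = D * A := by
    have := congrArg Matrix.transpose hsym
    rw [Matrix.transpose_mul, Matrix.transpose_sub, Matrix.transpose_neg,
      hXT, hMsym.eq] at this
    rw [hD, Matrix.diagonal_transpose] at this
    rw [← hD] at this
    rw [this, hsym]
  have hk : ∀ k : ℕ, (A ^ k)ᵀ * D = D * A ^ k := by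
    intro k
    induction k with
    | zero => simp
    | succ k ih =>
      rw [pow_succ, Matrix.transpose_mul, mul_assoc, ih, ← mul_assoc, h1,
        mul_assoc, ← pow_succ', ← pow_succ]
  have hDC : D *ᵥ C = C := by
    ext i
    rw [hD, Matrix.mulVec_diagonal, hC]
    rcases eq_or_ne i 0 with h | h
    · subst h; rw [hv0, one_mul]
    · simp [Pi.single_eq_of_ne h]
  have hmain : (Matrix.of fun (k : Fin (n + 1)) i => (C ᵥ* (A ^ (k : ℕ))) i)ᵀ =
      D * (Matrix.of fun i (k : Fin (n + 1)) => ((A ^ (k : ℕ)) *ᵥ B) i) := by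
    ext i k
    have : C ᵥ* (A ^ (k : ℕ)) = D *ᵥ ((A ^ (k : ℕ)) *ᵥ B) := by
      rw [← Matrix.mulVec_transpose, ← hDC, Matrix.mulVec_mulVec, hk,
        ← Matrix.mulVec_mulVec, hB, ← hC]
    rw [Matrix.transpose_apply, Matrix.of_apply, this, hD, Matrix.diagonal_mul,
      ← hD, Matrix.mulVec_diagonal, Matrix.of_apply]
  refine ⟨hmain, ?_⟩
  rw [← Matrix.rank_transpose, hmain, Matrix.rank_mul_eq_right_of_isUnit_det _ _ hdet]
end

section
/- Every MRMT matrix is Hurwitz: if A is an n×n irreducible Metzler matrix of the form where row/column 1 is coupled to all other indices, the submatrix Ã (deleting row and column 1) is diagonal with negative entries -d₁ᵢ/Vᵢ, A₁ᵢ = d₁ᵢ/V₁, Aᵢ₁ = d₁ᵢ/Vᵢ with d₁ᵢ > 0, Vᵢ > 0, and A₁₁ = -(Q/V₁) - ∑ᵢ d₁ᵢ/V₁ with Q > 0, then every eigenvalue of A has strictly negative real part. -/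
/-!
Weighting zone `i` by its volume `Vᵢ` makes `diag(V) A` symmetric: it is minus the weighted
Laplacian of the star graph joining the mobile zone to each immobile zone, plus the outflow
`-Q` at the mobile zone. Hence for an eigenvector `v` with eigenvalue `μ`,
`μ ∑ Vᵢ |vᵢ|² = -Q |v₀|² - ∑ d₁ᵢ |v₀ - vᵢ|²`, and the right side is negative unless `v = 0`.
-/

open Matrix

section WeightedEnergy

variable {ι : Type*} [Fintype ι] [DecidableEq ι]

theorem Matrix.exists_mulVec_eq_smul_of_mem_spectrum {K : Type*} [Field K] {M : Matrix ι ι K}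
    {μ : K} (hμ : μ ∈ spectrum K M) : ∃ v ≠ 0, M *ᵥ v = μ • v := by
  rw [← spectrum_toLin', ← Module.End.hasEigenvalue_iff_mem_spectrum] at hμ
  obtain ⟨v, hv⟩ := hμ.exists_hasEigenvector
  exact ⟨v, hv.2, by simpa using hv.apply_eq_smul⟩

theorem Matrix.re_lt_zero_of_mem_spectrum_of_weighted_form {M : Matrix ι ι ℂ} {w : ι → ℝ}
    (hw : ∀ i, 0 < w i)
    (hform : ∀ v : ι → ℂ, v ≠ 0 → (∑ i, (w i : ℂ) * (star (v i) * (M *ᵥ v) i)).re < 0)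
    {μ : ℂ} (hμ : μ ∈ spectrum ℂ M) : μ.re < 0 := by
  obtain ⟨v, hv, hMv⟩ := exists_mulVec_eq_smul_of_mem_spectrum hμ
  have hmass : 0 < ∑ i, w i * Complex.normSq (v i) := by
    obtain ⟨i, hi⟩ := Function.ne_iff.mp hv
    exact Finset.sum_pos' (fun j _ => mul_nonneg (hw j).le (Complex.normSq_nonneg _))
      ⟨i, Finset.mem_univ i, mul_pos (hw i) (Complex.normSq_pos.mpr hi)⟩
  have hform_eq : ∑ i, (w i : ℂ) * (star (v i) * (M *ᵥ v) i)
      = μ * ((∑ i, w i * Complex.normSq (v i) : ℝ) : ℂ) := by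
    push_cast
    simp only [hMv, Pi.smul_apply, smul_eq_mul, Finset.mul_sum, ← Complex.mul_conj,
      Complex.star_def]
    exact Finset.sum_congr rfl fun i _ => by ring
  have hre := hform v hv
  rw [hform_eq, Complex.re_mul_ofReal] at hre
  exact neg_of_mul_neg_left hre hmass.le

end WeightedEnergy

section MRMT

variable {n : ℕ} {Q : ℝ} {Vv : Fin (n + 1) → ℝ} {d : Fin n → ℝ}
  {A : Matrix (Fin (n + 1)) (Fin (n + 1)) ℝ}

theorem mrmt_weighted_mulVec_zero (hV0 : Vv 0 ≠ 0)
    (hA00 : A 0 0 = -(Q / Vv 0) - ∑ i, d i / Vv 0)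
    (hA0i : ∀ i : Fin n, A 0 i.succ = d i / Vv 0) (v : Fin (n + 1) → ℂ) :
    (Vv 0 : ℂ) * (A.map Complex.ofReal *ᵥ v) 0
      = -(Q : ℂ) * v 0 + ∑ i, (d i : ℂ) * (v i.succ - v 0) := by
  have h00 : Vv 0 * A 0 0 = -Q - ∑ i, d i := by
    rw [hA00, ← Finset.sum_div]; field_simp
  have h0i (i : Fin n) : Vv 0 * A 0 i.succ = d i := by
    rw [hA0i]; field_simp
  simp only [mulVec, dotProduct, Fin.sum_univ_succ, map_apply, mul_add, Finset.mul_sum,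
    ← mul_assoc, ← Complex.ofReal_mul, h00, h0i]
  push_cast
  simp only [mul_sub, Finset.sum_sub_distrib, ← Finset.sum_mul]
  ring

theorem mrmt_weighted_mulVec_succ (i : Fin n) (hVi : Vv i.succ ≠ 0)
    (hAi0 : A i.succ 0 = d i / Vv i.succ)
    (hAij : ∀ j : Fin n, A i.succ j.succ = if i = j then -(d i / Vv i.succ) else 0)
    (v : Fin (n + 1) → ℂ) :
    (Vv i.succ : ℂ) * (A.map Complex.ofReal *ᵥ v) i.succ = (d i : ℂ) * (v 0 - v i.succ) := by
  have hi0 : Vv i.succ * A i.succ 0 = d i := by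
    rw [hAi0]; field_simp
  have hii : Vv i.succ * A i.succ i.succ = -d i := by
    rw [hAij, if_pos rfl]; field_simp
  have hrow : ∑ j : Fin n, (A i.succ j.succ : ℂ) * v j.succ = A i.succ i.succ * v i.succ :=
    Fintype.sum_eq_single i fun j hj => by simp [hAij, Ne.symm hj]
  simp only [mulVec, dotProduct, Fin.sum_univ_succ, map_apply, hrow, mul_add, ← mul_assoc,
    ← Complex.ofReal_mul, hi0, hii]
  push_cast
  ring

theorem mrmt_weighted_form_eq (hV : ∀ i, Vv i ≠ 0)
    (hA00 : A 0 0 = -(Q / Vv 0) - ∑ i, d i / Vv 0)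
    (hA0i : ∀ i : Fin n, A 0 i.succ = d i / Vv 0)
    (hAi0 : ∀ i : Fin n, A i.succ 0 = d i / Vv i.succ)
    (hAij : ∀ i j : Fin n, A i.succ j.succ = if i = j then -(d i / Vv i.succ) else 0)
    (v : Fin (n + 1) → ℂ) :
    ∑ i, (Vv i : ℂ) * (star (v i) * (A.map Complex.ofReal *ᵥ v) i)
      = -((Q * Complex.normSq (v 0) + ∑ i, d i * Complex.normSq (v 0 - v i.succ) : ℝ) : ℂ) := by
  have hedge (i : Fin n) : star (v 0) * ((d i : ℂ) * (v i.succ - v 0))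
      + star (v i.succ) * ((d i : ℂ) * (v 0 - v i.succ))
      = -((d i : ℂ) * ((v 0 - v i.succ) * star (v 0 - v i.succ))) := by
    rw [star_sub]; ring
  calc ∑ i, (Vv i : ℂ) * (star (v i) * (A.map Complex.ofReal *ᵥ v) i)
      = star (v 0) * (-(Q : ℂ) * v 0 + ∑ i, (d i : ℂ) * (v i.succ - v 0))
        + ∑ i, star (v i.succ) * ((d i : ℂ) * (v 0 - v i.succ)) := by
        simp only [Fin.sum_univ_succ, mul_left_comm (Vv _ : ℂ),
          mrmt_weighted_mulVec_zero (hV 0) hA00 hA0i,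
          fun i => mrmt_weighted_mulVec_succ i (hV i.succ) (hAi0 i) (hAij i)]
    _ = -((Q : ℂ) * (v 0 * star (v 0)))
        + ∑ i, -((d i : ℂ) * ((v 0 - v i.succ) * star (v 0 - v i.succ))) := by
        rw [mul_add, Finset.mul_sum, add_assoc, ← Finset.sum_add_distrib,
          Finset.sum_congr rfl fun i _ => hedge i]
        ring
    _ = _ := by
        simp only [Complex.star_def, Complex.mul_conj]
        push_cast
        rw [Finset.sum_neg_distrib]
        ring

end MRMT

theorem star_graph_dissipation_pos {n : ℕ} {Q : ℝ} (hQ : 0 < Q) {d : Fin n → ℝ}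
    (hd : ∀ i, 0 < d i) {v : Fin (n + 1) → ℂ} (hv : v ≠ 0) :
    0 < Q * Complex.normSq (v 0) + ∑ i, d i * Complex.normSq (v 0 - v i.succ) := by
  by_cases h0 : v 0 = 0
  · obtain ⟨i, hi⟩ : ∃ i : Fin n, v i.succ ≠ 0 := by
      by_contra! h
      exact hv (funext (Fin.cases h0 h))
    have : 0 < ∑ i, d i * Complex.normSq (v 0 - v i.succ) :=
      Finset.sum_pos' (fun j _ => mul_nonneg (hd j).le (Complex.normSq_nonneg _))
        ⟨i, Finset.mem_univ i, mul_pos (hd i) (Complex.normSq_pos.mpr (by simpa [h0] using hi))⟩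
    simpa [h0] using this
  · exact add_pos_of_pos_of_nonneg (mul_pos hQ (Complex.normSq_pos.mpr h0))
      (Finset.sum_nonneg fun i _ => mul_nonneg (hd i).le (Complex.normSq_nonneg _))

/-- every MRMT matrix is Hurwitz: all its (complex) eigenvalues have
strictly negative real part. -/
theorem mrmt_stmt8 {n : ℕ} (Q : ℝ) (hQ : 0 < Q)
    (Vv : Fin (n + 1) → ℝ) (hV : ∀ i, 0 < Vv i)
    (d : Fin n → ℝ) (hd : ∀ i, 0 < d i)
    (A : Matrix (Fin (n + 1)) (Fin (n + 1)) ℝ)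
    (hA00 : A 0 0 = -(Q / Vv 0) - ∑ i, d i / Vv 0)
    (hA0i : ∀ i : Fin n, A 0 i.succ = d i / Vv 0)
    (hAi0 : ∀ i : Fin n, A i.succ 0 = d i / Vv i.succ)
    (hAij : ∀ i j : Fin n, A i.succ j.succ = if i = j then -(d i / Vv i.succ) else 0) :
    ∀ μ ∈ spectrum ℂ (A.map Complex.ofReal), μ.re < 0 := by
  intro μ hμ
  refine re_lt_zero_of_mem_spectrum_of_weighted_form hV (fun v hv => ?_) hμ
  rw [mrmt_weighted_form_eq (fun i => (hV i).ne') hA00 hA0i hAi0 hAij v, Complex.neg_re,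
    Complex.ofReal_re, neg_lt_zero]
  exact star_graph_dissipation_pos hQ hd hv
end

section
/- Let A be an n×n matrix satisfying A𝟙 = -e₁, and write A in block form with Ã the lower-right (n−1)×(n−1) block, so that the first column of A below the diagonal equals −Ã·𝟙̃. If the pair (A, e₁) is controllable, then the pair (Ã, 𝟙̃) is controllable and Ã is invertible implies rank[Ã𝟙̃, Ã²𝟙̃, …, Ã^{n−1}𝟙̃] = n−1. -/
/-!
Write `A = [[a, bᵀ], [c, Ã]]` with `c = -Ã𝟙̃`. Dropping the first coordinate of `A w` gives
`Ã (tail w) - w₀ Ã𝟙̃`, so by induction the tail of `Aᵏ e₁` lies in the span of `Ã𝟙̃, …, Ãᵏ𝟙̃`.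
Controllability of `(A, e₁)` makes the tails of `e₁, Ae₁, …, Aⁿe₁` span `ℝⁿ`, hence
`Ã𝟙̃, …, Ãⁿ𝟙̃` span `ℝⁿ`. Their matrix is `Ã [𝟙̃, Ã𝟙̃, …, Ãⁿ⁻¹𝟙̃]`, so the second factor has
full rank too.
-/

open Matrix Submodule Set

theorem Matrix.rank_eq_iff_span_col_eq_top {K ι : Type*} [Field K] [Fintype ι] {m : ℕ}
    (M : Matrix (Fin m) ι K) : M.rank = m ↔ span K (range M.col) = ⊤ := by
  rw [rank_eq_finrank_span_cols]
  refine ⟨fun h => eq_top_of_finrank_eq (by rw [h, Module.finrank_fin_fun]), fun h => ?_⟩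
  rw [h, finrank_top, Module.finrank_fin_fun]

theorem Matrix.mul_of_pow_mulVec {R ι : Type*} [CommRing R] [Fintype ι] [DecidableEq ι]
    (B : Matrix ι ι R) (v : ι → R) (m : ℕ) :
    B * of (fun i (k : Fin m) => (B ^ (k : ℕ) *ᵥ v) i) =
      of fun i (k : Fin m) => (B ^ ((k : ℕ) + 1) *ᵥ v) i := by
  ext i k
  rw [of_apply, pow_succ', ← mulVec_mulVec]
  rfl

section BlockStructure

variable {n : ℕ}

theorem tail_mulVec_of_col_eq {R : Type*} [CommRing R] (A : Matrix (Fin (n + 1)) (Fin (n + 1)) R)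
    (hcol : ∀ i : Fin n, A i.succ 0 = -((A.submatrix Fin.succ Fin.succ) *ᵥ fun _ => (1 : R)) i)
    (w : Fin (n + 1) → R) :
    Fin.tail (A *ᵥ w) = A.submatrix Fin.succ Fin.succ *ᵥ Fin.tail w
      - w 0 • (A.submatrix Fin.succ Fin.succ *ᵥ fun _ => 1) := by
  funext i
  simp only [Fin.tail, mulVec, dotProduct, Fin.sum_univ_succ, hcol i, submatrix_apply,
    Pi.sub_apply, Pi.smul_apply, smul_eq_mul, mul_one]
  ring

theorem tail_pow_mulVec_single_mem_span {R : Type*} [CommRing R]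
    (A : Matrix (Fin (n + 1)) (Fin (n + 1)) R)
    (hcol : ∀ i : Fin n, A i.succ 0 = -((A.submatrix Fin.succ Fin.succ) *ᵥ fun _ => (1 : R)) i)
    (k : ℕ) :
    Fin.tail (A ^ k *ᵥ Pi.single 0 1) ∈ span R (range fun j : Fin k =>
      A.submatrix Fin.succ Fin.succ ^ ((j : ℕ) + 1) *ᵥ fun _ => 1) := by
  induction k with
  | zero =>
    convert (span R _).zero_mem
    funext i
    simp [Fin.tail]
  | succ k ih =>
    rw [pow_succ', ← mulVec_mulVec, tail_mulVec_of_col_eq A hcol]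
    refine sub_mem ?_ (smul_mem _ _ (subset_span ⟨0, by simp⟩))
    have h := mem_map_of_mem (f := (A.submatrix Fin.succ Fin.succ).mulVecLin) ih
    rw [map_span, ← range_comp] at h
    refine span_mono ?_ h
    rintro _ ⟨j, rfl⟩
    exact ⟨j.succ, by simp [pow_succ' _ ((j : ℕ) + 1), mulVec_mulVec]⟩

theorem rank_of_pow_succ_mulVec_one_eq {K : Type*} [Field K]
    (A : Matrix (Fin (n + 1)) (Fin (n + 1)) K)
    (hcol : ∀ i : Fin n, A i.succ 0 = -((A.submatrix Fin.succ Fin.succ) *ᵥ fun _ => (1 : K)) i)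
    (hctrb : (of fun i (k : Fin (n + 1)) => (A ^ (k : ℕ) *ᵥ Pi.single 0 (1 : K)) i).rank = n + 1) :
    (of fun i (k : Fin n) =>
      (A.submatrix Fin.succ Fin.succ ^ ((k : ℕ) + 1) *ᵥ fun _ => (1 : K)) i).rank = n := by
  rw [rank_eq_iff_span_col_eq_top, eq_top_iff]
  have htop := (rank_eq_iff_span_col_eq_top _).1 hctrb
  calc ⊤ = Submodule.map (LinearMap.funLeft K K Fin.succ) ⊤ := by
        rw [Submodule.map_top, LinearMap.range_eq_top.2
          (LinearMap.funLeft_surjective_of_injective _ _ _ (Fin.succ_injective n))]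
    _ = span K (range fun k : Fin (n + 1) => Fin.tail (A ^ (k : ℕ) *ᵥ Pi.single 0 1)) := by
        rw [← htop, map_span, ← range_comp]
        rfl
    _ ≤ _ := span_le.2 <| by
        rintro _ ⟨k, rfl⟩
        refine span_mono ?_ (tail_pow_mulVec_single_mem_span A hcol k)
        rintro _ ⟨j, rfl⟩
        exact ⟨⟨j, by omega⟩, rfl⟩

end BlockStructure

theorem mrmt_stmt11_general {n : ℕ} (A : Matrix (Fin (n + 1)) (Fin (n + 1)) ℝ)
    (hcol : ∀ i : Fin n,
      A i.succ 0 = -((A.submatrix Fin.succ Fin.succ) *ᵥ fun _ => (1 : ℝ)) i)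
    (hctrb : (Matrix.of fun i (k : Fin (n + 1)) =>
      ((A ^ (k : ℕ)) *ᵥ Pi.single (0 : Fin (n + 1)) (1 : ℝ)) i).rank = n + 1) :
    (Matrix.of fun i (k : Fin n) =>
        (((A.submatrix Fin.succ Fin.succ) ^ (k : ℕ)) *ᵥ fun _ => (1 : ℝ)) i).rank = n ∧
      (Matrix.of fun i (k : Fin n) =>
        (((A.submatrix Fin.succ Fin.succ) ^ ((k : ℕ) + 1)) *ᵥ fun _ => (1 : ℝ)) i).rank = n := by
  have hshift := rank_of_pow_succ_mulVec_one_eq A hcol hctrb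
  refine ⟨le_antisymm (rank_le_width _) ?_, hshift⟩
  calc n = _ := hshift.symm
    _ = _ := by rw [← mul_of_pow_mulVec]
    _ ≤ _ := rank_mul_le_right _ _

/-- if A𝟙 = -e₁ (so the first column of A below the diagonal equals
-Ã𝟙̃) and (A,e₁) is controllable, then (Ã,𝟙̃) is controllable, and since Ã is
invertible, [Ã𝟙̃, Ã²𝟙̃, …, Ã^{n}𝟙̃] has full rank n. -/
theorem mrmt_stmt11 {n : ℕ} (A : Matrix (Fin (n + 1)) (Fin (n + 1)) ℝ)
    (hA1 : A *ᵥ (fun _ => 1) = -(Pi.single 0 1))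
    (hcol : ∀ i : Fin n,
      A i.succ 0 = -((A.submatrix Fin.succ Fin.succ) *ᵥ fun _ => (1 : ℝ)) i)
    (hAt : IsUnit (A.submatrix Fin.succ Fin.succ).det)
    (hctrb : (Matrix.of fun i (k : Fin (n + 1)) =>
      ((A ^ (k : ℕ)) *ᵥ Pi.single (0 : Fin (n + 1)) (1 : ℝ)) i).rank = n + 1) :
    (Matrix.of fun i (k : Fin n) =>
        (((A.submatrix Fin.succ Fin.succ) ^ (k : ℕ)) *ᵥ fun _ => (1 : ℝ)) i).rank = n ∧
      (Matrix.of fun i (k : Fin n) =>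
        (((A.submatrix Fin.succ Fin.succ) ^ ((k : ℕ) + 1)) *ᵥ fun _ => (1 : ℝ)) i).rank = n :=
  mrmt_stmt11_general A hcol hctrb
end

section
/- Let S be a symmetric m×m matrix and q₁ a unit vector with rank[q₁, Sq₁, …, S^{m−1}q₁] = m. Then the Lanczos algorithm starting from q₁ does not break down and produces an orthogonal matrix Q = [q₁, …, q_m] such that QᵗSQ is symmetric tridiagonal with strictly positive entries on the sub- and super-diagonal. -/
/-!
Orthonormalise the Krylov sequence `vₖ = Sᵏ q₁` (`k = 0, 1, …`) by Gram–Schmidt into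
`u₀ = q₁, u₁, …`. Since `uⱼ ∈ span {v₀, …, vⱼ}`, the vector `S uⱼ` lies in `span {v₀, …, vⱼ₊₁}`,
which is orthogonal to `uᵢ` for `i > j + 1`; so `QᵗSQ` is upper Hessenberg, hence tridiagonal as it
is symmetric. If `gⱼ` are the unnormalised Gram–Schmidt vectors, then
`S gⱼ = vⱼ₊₁ + (an element of span {v₀, …, vⱼ})`, so `⟪uⱼ₊₁, S uⱼ⟫ = ‖gⱼ₊₁‖ / ‖gⱼ‖`, which is
positive because the full rank of the Krylov matrix keeps every `gⱼ` nonzero.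
-/

open Matrix Submodule Set InnerProductSpace
open scoped InnerProductSpace

theorem LinearIndependent.comp_Iic_of_fin {R M : Type*} [Semiring R] [AddCommMonoid M]
    [Module R M] {f : ℕ → M} {m n : ℕ} (h : LinearIndependent R (fun k : Fin (m + 1) => f k))
    (hn : n ≤ m) : LinearIndependent R (f ∘ ((↑) : Iic n → ℕ)) :=
  h.comp (fun k : Iic n => ⟨k, Nat.lt_succ_of_le ((mem_Iic.1 k.2).trans hn)⟩)
    fun _ _ hab => Subtype.ext (congrArg Fin.val hab)

section GramSchmidt

variable {𝕜 E : Type*} [RCLike 𝕜] [NormedAddCommGroup E] [InnerProductSpace 𝕜 E]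

section LinearOrder

variable {ι : Type*} [LinearOrder ι] [LocallyFiniteOrderBot ι] [WellFoundedLT ι]
  {f : ι → E} {n : ι}

theorem inner_gramSchmidtNormed_eq_zero_of_mem_span {y : E} (hy : y ∈ span 𝕜 (f '' Iio n)) :
    ⟪gramSchmidtNormed 𝕜 f n, y⟫_𝕜 = 0 := by
  have hle : span 𝕜 (f '' Iio n) ≤ (𝕜 ∙ gramSchmidtNormed 𝕜 f n)ᗮ := by
    refine span_le.2 ?_
    rintro _ ⟨i, hi, rfl⟩
    rw [SetLike.mem_coe, mem_orthogonal_singleton_iff_inner_right, gramSchmidtNormed,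
      inner_smul_left, gramSchmidt_inv_triangular 𝕜 f hi, mul_zero]
  exact mem_orthogonal_singleton_iff_inner_right.1 (hle hy)

theorem sub_gramSchmidt_mem_span : f n - gramSchmidt 𝕜 f n ∈ span 𝕜 (f '' Iio n) := by
  rw [← span_gramSchmidt_Iio, gramSchmidt_def 𝕜 f n, sub_sub_cancel]
  refine sum_mem fun i hi => ?_
  rw [starProjection_singleton]
  exact smul_mem _ _ (subset_span (mem_image_of_mem _ (Finset.mem_Iio.1 hi)))

theorem inner_gramSchmidtNormed_self :
    ⟪gramSchmidtNormed 𝕜 f n, f n⟫_𝕜 = ‖gramSchmidt 𝕜 f n‖ := by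
  have hsplit : f n = gramSchmidt 𝕜 f n + (f n - gramSchmidt 𝕜 f n) := (add_sub_cancel _ _).symm
  rw [hsplit, inner_add_right,
    inner_gramSchmidtNormed_eq_zero_of_mem_span sub_gramSchmidt_mem_span, add_zero,
    gramSchmidtNormed, inner_smul_left, inner_self_eq_norm_sq_to_K]
  rcases eq_or_ne (gramSchmidt 𝕜 f n) 0 with h | h
  · simp [h]
  · simp only [map_inv₀, RCLike.conj_ofReal]
    field_simp

end LinearOrder

variable {f : ℕ → E} {m : ℕ}

theorem gramSchmidtNormed_mem_span_Iio_succ (n : ℕ) :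
    gramSchmidtNormed 𝕜 f n ∈ span 𝕜 (f '' Iio (n + 1)) := by
  rw [Iio_add_one_eq_Iic]
  exact smul_mem _ _ (gramSchmidt_mem_span 𝕜 f le_rfl)

theorem gramSchmidtNormed_zero_of_norm_eq_one (h : ‖f 0‖ = 1) : gramSchmidtNormed 𝕜 f 0 = f 0 := by
  rw [gramSchmidtNormed, ← Nat.bot_eq_zero, gramSchmidt_bot, Nat.bot_eq_zero, h, RCLike.ofReal_one,
    inv_one, one_smul]

theorem gramSchmidt_ne_zero_of_fin (h : LinearIndependent 𝕜 (fun k : Fin (m + 1) => f k))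
    {n : ℕ} (hn : n ≤ m) : gramSchmidt 𝕜 f n ≠ 0 :=
  gramSchmidt_ne_zero_coe n (h.comp_Iic_of_fin hn)

theorem orthonormal_gramSchmidtNormed_fin
    (h : LinearIndependent 𝕜 (fun k : Fin (m + 1) => f k)) :
    Orthonormal 𝕜 (fun k : Fin (m + 1) => gramSchmidtNormed 𝕜 f k) := by
  refine ⟨fun k => gramSchmidtNormed_unit_length_coe _ (h.comp_Iic_of_fin (by omega)), ?_⟩
  intro a b hab
  simp [gramSchmidtNormed, inner_smul_left, inner_smul_right,
    gramSchmidt_orthogonal 𝕜 f (Fin.val_injective.ne hab)]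

end GramSchmidt

section Krylov

variable {R M : Type*} [Semiring R] [AddCommMonoid M] [Module R M] (T : M →ₗ[R] M) (x : M)

def krylov (n : ℕ) : M := (T ^ n) x

theorem krylov_zero : krylov T x 0 = x := rfl

theorem krylov_succ (n : ℕ) : krylov T x (n + 1) = T (krylov T x n) := by
  rw [krylov, pow_succ', Module.End.mul_apply, krylov]

theorem map_span_krylov_Iio_le (n : ℕ) :
    (span R (krylov T x '' Iio n)).map T ≤ span R (krylov T x '' Iio (n + 1)) := by
  rw [map_span, ← image_comp]
  refine span_mono ?_
  rintro _ ⟨k, hk, rfl⟩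
  exact ⟨k + 1, Nat.add_lt_add_right hk 1, krylov_succ T x k⟩

end Krylov

section Lanczos

variable {𝕜 E : Type*} [RCLike 𝕜] [NormedAddCommGroup E] [InnerProductSpace 𝕜 E]
  (T : E →ₗ[𝕜] E) (x : E)

theorem inner_gramSchmidtNormed_krylov_map_eq_zero {i j : ℕ} (hji : j + 1 < i) :
    ⟪gramSchmidtNormed 𝕜 (krylov T x) i, T (gramSchmidtNormed 𝕜 (krylov T x) j)⟫_𝕜 = 0 := by
  have hTq := map_span_krylov_Iio_le T x _ (mem_map_of_mem (gramSchmidtNormed_mem_span_Iio_succ j))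
  exact inner_gramSchmidtNormed_eq_zero_of_mem_span
    (span_mono (image_mono (Iio_subset_Iio hji)) hTq)

theorem inner_gramSchmidtNormed_krylov_succ_map (j : ℕ) :
    ⟪gramSchmidtNormed 𝕜 (krylov T x) (j + 1), T (gramSchmidtNormed 𝕜 (krylov T x) j)⟫_𝕜 =
      ((‖gramSchmidt 𝕜 (krylov T x) (j + 1)‖ / ‖gramSchmidt 𝕜 (krylov T x) j‖ : ℝ) : 𝕜) := by
  set g := gramSchmidt 𝕜 (krylov T x)
  have hTg : T (g j) = krylov T x (j + 1) - T (krylov T x j - g j) := by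
    rw [map_sub, krylov_succ, sub_sub_cancel]
  have hrest : T (krylov T x j - g j) ∈ span 𝕜 (krylov T x '' Iio (j + 1)) :=
    map_span_krylov_Iio_le T x j (mem_map_of_mem sub_gramSchmidt_mem_span)
  have hq : gramSchmidtNormed 𝕜 (krylov T x) j = (‖g j‖ : 𝕜)⁻¹ • g j := rfl
  rw [hq, map_smul, inner_smul_right, hTg, inner_sub_right,
    inner_gramSchmidtNormed_eq_zero_of_mem_span hrest, sub_zero, inner_gramSchmidtNormed_self]
  push_cast
  ring

end Lanczos

theorem inner_gramSchmidtNormed_krylov_succ_map_pos {E : Type*} [NormedAddCommGroup E]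
    [InnerProductSpace ℝ E] {T : E →ₗ[ℝ] E} {x : E} {m j : ℕ}
    (hli : LinearIndependent ℝ (fun k : Fin (m + 1) => krylov T x k)) (hj : j + 1 ≤ m) :
    0 < ⟪gramSchmidtNormed ℝ (krylov T x) (j + 1), T (gramSchmidtNormed ℝ (krylov T x) j)⟫_ℝ := by
  rw [inner_gramSchmidtNormed_krylov_succ_map, RCLike.ofReal_real_eq_id, id]
  exact div_pos (norm_pos_iff.2 (gramSchmidt_ne_zero_of_fin hli hj))
    (norm_pos_iff.2 (gramSchmidt_ne_zero_of_fin hli (by omega)))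

section Matrix

variable {m : Type*} [Fintype m] [DecidableEq m]

theorem krylov_toEuclideanLin {𝕜 : Type*} [RCLike 𝕜] (S : Matrix m m 𝕜) (v : m → 𝕜) (k : ℕ) :
    krylov (toEuclideanLin S) (WithLp.toLp 2 v) k = WithLp.toLp 2 ((S ^ k) *ᵥ v) := by
  rw [krylov, ← toLpLin_pow, toLpLin_toLp, toLin'_apply]

theorem transpose_mul_mul_apply_eq_inner {n : Type*} (A : Matrix m m ℝ) (u : n → EuclideanSpace ℝ m)
    (i j : n) :
    ((of fun a b => u b a)ᵀ * A * of fun a b => u b a) i j = ⟪u i, toEuclideanLin A (u j)⟫_ℝ := by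
  rw [Matrix.mul_assoc, mul_apply]
  simp only [EuclideanSpace.inner_eq_star_dotProduct, toLpLin_apply, dotProduct, mulVec,
    mul_apply, transpose_apply, of_apply, star_trivial, mul_comm]

theorem transpose_mul_self_eq_one_of_orthonormal {n : Type*} [DecidableEq n]
    {u : n → EuclideanSpace ℝ m} (hu : Orthonormal ℝ u) :
    (of fun a b => u b a)ᵀ * (of fun a b => u b a) = 1 := by
  ext i j
  rw [← Matrix.mul_one (of fun a b => u b a)ᵀ, transpose_mul_mul_apply_eq_inner, toLpLin_one,
    LinearMap.id_apply, orthonormal_iff_ite.1 hu, one_apply]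

theorem linearIndependent_krylov_toEuclideanLin_of_rank_eq {𝕜 : Type*} [RCLike 𝕜] {n : ℕ}
    (S : Matrix (Fin n) (Fin n) 𝕜) (v : Fin n → 𝕜)
    (h : (of fun i (k : Fin n) => ((S ^ (k : ℕ)) *ᵥ v) i).rank = n) :
    LinearIndependent 𝕜 (fun k : Fin n => krylov (toEuclideanLin S) (WithLp.toLp 2 v) k) := by
  have hcol : LinearIndependent 𝕜 (fun k : Fin n => (S ^ (k : ℕ)) *ᵥ v) := by
    rw [linearIndependent_iff_card_eq_finrank_span, Set.finrank, Fintype.card_fin]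
    exact h.symm.trans (rank_eq_finrank_span_cols _)
  rw [funext fun k : Fin n => krylov_toEuclideanLin S v k]
  exact hcol.map' (WithLp.linearEquiv 2 𝕜 (Fin n → 𝕜)).symm.toLinearMap (LinearEquiv.ker _)

end Matrix

/-- for a symmetric matrix S and a unit vector q₁ whose Krylov
matrix has full rank, the Lanczos algorithm does not break down and produces an
orthogonal matrix Q with first column q₁ such that QᵗSQ is symmetric tridiagonal
with strictly positive sub- and super-diagonal entries. -/
theorem mrmt_stmt16 {m : ℕ} (S : Matrix (Fin (m + 1)) (Fin (m + 1)) ℝ)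
    (hS : S.IsSymm)
    (q1 : Fin (m + 1) → ℝ) (hq1 : ∑ i, q1 i ^ 2 = 1)
    (hk : (Matrix.of fun i (k : Fin (m + 1)) => ((S ^ (k : ℕ)) *ᵥ q1) i).rank = m + 1) :
    ∃ Q : Matrix (Fin (m + 1)) (Fin (m + 1)) ℝ,
      Qᵀ * Q = 1 ∧
      (∀ i, Q i 0 = q1 i) ∧
      (Qᵀ * S * Q).IsSymm ∧
      (∀ i j : Fin (m + 1), ((i : ℕ) + 1 < (j : ℕ) ∨ (j : ℕ) + 1 < (i : ℕ)) →
        (Qᵀ * S * Q) i j = 0) ∧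
      (∀ i j : Fin (m + 1), (j : ℕ) = (i : ℕ) + 1 →
        0 < (Qᵀ * S * Q) i j ∧ 0 < (Qᵀ * S * Q) j i) := by
  set q := gramSchmidtNormed ℝ (krylov (toEuclideanLin S) (WithLp.toLp 2 q1))
  have hli := linearIndependent_krylov_toEuclideanLin_of_rank_eq S q1 hk
  have hx : ‖WithLp.toLp 2 q1‖ = 1 := by
    rw [EuclideanSpace.norm_eq]
    simp [hq1]
  set Q : Matrix (Fin (m + 1)) (Fin (m + 1)) ℝ := of fun a b => q b a
  have hsymm : (Qᵀ * S * Q).IsSymm := by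
    rw [IsSymm, transpose_mul, transpose_mul, transpose_transpose, hS.eq, Matrix.mul_assoc]
  have hentry (i j : Fin (m + 1)) : (Qᵀ * S * Q) i j = ⟪q i, toEuclideanLin S (q j)⟫_ℝ :=
    transpose_mul_mul_apply_eq_inner S (fun k : Fin (m + 1) => q k) i j
  refine ⟨Q, transpose_mul_self_eq_one_of_orthonormal (orthonormal_gramSchmidtNormed_fin hli),
    fun i => ?_, hsymm, ?_, ?_⟩
  · simp [Q, q, gramSchmidtNormed_zero_of_norm_eq_one, krylov_zero, hx]
  · rintro i j (h | h)
    · rw [← hsymm.apply, hentry]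
      exact inner_gramSchmidtNormed_krylov_map_eq_zero _ _ h
    · rw [hentry]
      exact inner_gramSchmidtNormed_krylov_map_eq_zero _ _ h
  · intro i j h
    have hpos : 0 < (Qᵀ * S * Q) j i := by
      rw [hentry, h]
      exact inner_gramSchmidtNormed_krylov_succ_map_pos hli (by omega)
    exact ⟨hsymm.apply i j ▸ hpos, hpos⟩
end

section
/- Let A be an MRMT matrix (compartmental, with Ã = Δ diagonal with distinct negative entries) such that (A, e₁) is controllable, and let T = diag(1, QU⁻¹), where Q is the orthogonal matrix from the Lanczos algorithm applied to Δ with initial vector q₁ = A(2:n,1)/‖A(2:n,1)‖ and U is the Cholesky factor of QᵗṼQ (so QᵗṼQ = UᵗU with U upper triangular with positive diagonal, Ṽ the diagonal volume matrix with V₁ = 1). Then T⁻¹AT is symmetric tridiagonal with positive entries on the sub- and super-diagonal. -/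
/-!
With `V = diag v`, the compartmental form gives `V * A = -e₁e₁ᵀ - M`, which is symmetric, and
the Cholesky relation gives `Tᵀ * V * T = 1`; hence `T⁻¹ = Tᵀ * V` and `T⁻¹AT = Tᵀ(VA)T` is
symmetric. On the other hand `T⁻¹AT = diag(1,U) · K · diag(1,U⁻¹)` with
`K = diag(1,Q)ᵀ A diag(1,Q)`. Because the first Lanczos vector is parallel to `A(2:n,1)`, `K` is
upper Hessenberg with positive subdiagonal (its `(2,1)` entry is `‖A(2:n,1)‖`), and multiplying
by upper triangular matrices with positive diagonal on both sides preserves both properties.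
A symmetric upper Hessenberg matrix is tridiagonal.
-/

open Matrix

/-- Block-diagonal matrix diag(1, T̃). -/
def blockDiag1 {n : ℕ} (Rt : Matrix (Fin n) (Fin n) ℝ) :
    Matrix (Fin (n + 1)) (Fin (n + 1)) ℝ :=
  Matrix.of fun i j =>
    if hi : i = 0 then (if j = 0 then 1 else 0)
    else if hj : j = 0 then 0
    else Rt (i.pred hi) (j.pred hj)

section BlockDiag1

variable {m : ℕ}

@[simp]
lemma blockDiag1_apply_zero_zero (X : Matrix (Fin m) (Fin m) ℝ) : blockDiag1 X 0 0 = 1 := by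
  simp [blockDiag1]

@[simp]
lemma blockDiag1_apply_zero_succ (X : Matrix (Fin m) (Fin m) ℝ) (j : Fin m) :
    blockDiag1 X 0 j.succ = 0 := by
  simp [blockDiag1]

@[simp]
lemma blockDiag1_apply_succ_zero (X : Matrix (Fin m) (Fin m) ℝ) (i : Fin m) :
    blockDiag1 X i.succ 0 = 0 := by
  simp [blockDiag1]

@[simp]
lemma blockDiag1_apply_succ_succ (X : Matrix (Fin m) (Fin m) ℝ) (i j : Fin m) :
    blockDiag1 X i.succ j.succ = X i j := by
  simp [blockDiag1]

lemma blockDiag1_mul (X Y : Matrix (Fin m) (Fin m) ℝ) :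
    blockDiag1 X * blockDiag1 Y = blockDiag1 (X * Y) := by
  ext i j
  cases i using Fin.cases <;> cases j using Fin.cases <;> simp [mul_apply, Fin.sum_univ_succ]

lemma blockDiag1_one : blockDiag1 (1 : Matrix (Fin m) (Fin m) ℝ) = 1 := by
  ext i j
  cases i using Fin.cases <;> cases j using Fin.cases <;>
    simp [one_apply, (Fin.succ_ne_zero _).symm]

lemma blockDiag1_transpose (X : Matrix (Fin m) (Fin m) ℝ) :
    (blockDiag1 X)ᵀ = blockDiag1 Xᵀ := by
  ext i j
  cases i using Fin.cases <;> cases j using Fin.cases <;> simp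

lemma diagonal_eq_blockDiag1 {v : Fin (m + 1) → ℝ} (hv0 : v 0 = 1) :
    diagonal v = blockDiag1 (diagonal fun i => v i.succ) := by
  ext i j
  cases i using Fin.cases <;> cases j using Fin.cases <;>
    simp [hv0, diagonal_apply, (Fin.succ_ne_zero _).symm]

lemma isUpperTriangular_blockDiag1 {X : Matrix (Fin m) (Fin m) ℝ} (hX : X.IsUpperTriangular) :
    (blockDiag1 X).IsUpperTriangular := by
  intro i j hij
  cases i using Fin.cases <;> cases j using Fin.cases
  · exact absurd hij (lt_irrefl _)
  · exact absurd hij (Fin.succ_pos _).not_gt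
  · simp
  · simpa using hX (Fin.succ_lt_succ_iff.mp hij)

lemma blockDiag1_apply_self_pos {X : Matrix (Fin m) (Fin m) ℝ} (hX : ∀ i, 0 < X i i)
    (i : Fin (m + 1)) : 0 < blockDiag1 X i i := by
  cases i using Fin.cases
  · simp
  · simpa using hX _

lemma blockDiag1_mul_mul_apply_succ_zero (X Y : Matrix (Fin (m + 1)) (Fin (m + 1)) ℝ)
    (A : Matrix (Fin (m + 2)) (Fin (m + 2)) ℝ) (i : Fin (m + 1)) :
    (blockDiag1 X * A * blockDiag1 Y) i.succ 0 = (X *ᵥ fun k => A k.succ 0) i := by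
  simp [mul_apply, mulVec, dotProduct, Fin.sum_univ_succ]

lemma blockDiag1_mul_mul_apply_succ_succ (X Y : Matrix (Fin (m + 1)) (Fin (m + 1)) ℝ)
    (A : Matrix (Fin (m + 2)) (Fin (m + 2)) ℝ) (i j : Fin (m + 1)) :
    (blockDiag1 X * A * blockDiag1 Y) i.succ j.succ
      = (X * A.submatrix Fin.succ Fin.succ * Y) i j := by
  simp [mul_apply, Fin.sum_univ_succ]

lemma blockDiag1_inv_mul_mul {Q U : Matrix (Fin m) (Fin m) ℝ} (hQ : Qᵀ * Q = 1)
    (hU : IsUnit U.det) (A : Matrix (Fin (m + 1)) (Fin (m + 1)) ℝ) :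
    (blockDiag1 (Q * U⁻¹))⁻¹ * A * blockDiag1 (Q * U⁻¹)
      = blockDiag1 U * (blockDiag1 Qᵀ * A * blockDiag1 Q) * blockDiag1 U⁻¹ := by
  have hinv : (blockDiag1 (Q * U⁻¹))⁻¹ = blockDiag1 U * blockDiag1 Qᵀ := by
    refine inv_eq_left_inv ?_
    rw [blockDiag1_mul, blockDiag1_mul, Matrix.mul_assoc, ← Matrix.mul_assoc Qᵀ, hQ,
      Matrix.one_mul, mul_nonsing_inv _ hU, blockDiag1_one]
  rw [hinv, ← blockDiag1_mul Q]
  simp only [Matrix.mul_assoc]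

end BlockDiag1

namespace Matrix

section Triangular

variable {ι : Type*} [Fintype ι] [LinearOrder ι]

lemma IsUpperTriangular.mul_apply_self {R : Type*} [NonUnitalNonAssocSemiring R]
    {A B : Matrix ι ι R} (hA : A.IsUpperTriangular)
    (hB : B.IsUpperTriangular) (i : ι) : (A * B) i i = A i i * B i i := by
  refine Finset.sum_eq_single i (fun k _ hki => ?_) (by simp)
  rcases lt_or_gt_of_ne hki with h | h
  · simp [hA h]
  · simp [hB h]

variable [DecidableEq ι] {K : Type*} [Field K] [LinearOrder K] [IsStrictOrderedRing K]

lemma IsUpperTriangular.isUnit_det {U : Matrix ι ι K} (hU : U.IsUpperTriangular)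
    (hpos : ∀ i, 0 < U i i) : IsUnit U.det := by
  rw [det_of_isUpperTriangular hU]
  exact (Finset.prod_pos fun i _ => hpos i).ne'.isUnit

lemma IsUpperTriangular.inv_apply_self_pos {U : Matrix ι ι K} (hU : U.IsUpperTriangular)
    (hpos : ∀ i, 0 < U i i) (i : ι) : 0 < U⁻¹ i i := by
  have hdet := hU.isUnit_det hpos
  have := U.invertibleOfIsUnitDet hdet
  have hinv : U⁻¹ i i * U i i = 1 := by
    rw [← IsUpperTriangular.mul_apply_self (blockTriangular_inv_of_blockTriangular hU) hU,
      nonsing_inv_mul _ hdet, one_apply_eq]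
  exact pos_of_mul_pos_left (hinv ▸ one_pos) (hpos i).le

end Triangular

section Hessenberg

variable {m : ℕ} {R : Type*}

def IsUpperHessenberg [Zero R] (H : Matrix (Fin m) (Fin m) R) : Prop :=
  ∀ i j : Fin m, (j : ℕ) + 1 < i → H i j = 0

def SubdiagonalPos [Zero R] [LT R] (H : Matrix (Fin m) (Fin m) R) : Prop :=
  ∀ i j : Fin m, (i : ℕ) = j + 1 → 0 < H i j

section Semiring

variable [NonUnitalNonAssocSemiring R] {U H : Matrix (Fin m) (Fin m) R}

lemma IsUpperHessenberg.upperTriangular_mul (hU : U.IsUpperTriangular)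
    (hH : H.IsUpperHessenberg) : (U * H).IsUpperHessenberg := by
  intro i j hij
  rw [mul_apply]
  refine Finset.sum_eq_zero fun k _ => ?_
  by_cases hki : k < i
  · rw [hU hki, zero_mul]
  · rw [hH k j (by rw [not_lt, Fin.le_iff_val_le_val] at hki; omega), mul_zero]

lemma IsUpperHessenberg.mul_upperTriangular (hH : H.IsUpperHessenberg)
    (hU : U.IsUpperTriangular) : (H * U).IsUpperHessenberg := by
  intro i j hij
  rw [mul_apply]
  refine Finset.sum_eq_zero fun k _ => ?_
  by_cases hjk : j < k
  · rw [hU hjk, mul_zero]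
  · rw [hH i k (by rw [not_lt, Fin.le_iff_val_le_val] at hjk; omega), zero_mul]

lemma IsUpperHessenberg.upperTriangular_mul_apply_subdiag (hU : U.IsUpperTriangular)
    (hH : H.IsUpperHessenberg) {i j : Fin m} (hij : (i : ℕ) = j + 1) :
    (U * H) i j = U i i * H i j := by
  rw [mul_apply]
  refine Finset.sum_eq_single i (fun k _ hki => ?_) (by simp)
  rcases lt_or_gt_of_ne hki with h | h
  · rw [hU h, zero_mul]
  · rw [hH k j (by rw [Fin.lt_def] at h; omega), mul_zero]

lemma IsUpperHessenberg.mul_upperTriangular_apply_subdiag (hH : H.IsUpperHessenberg)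
    (hU : U.IsUpperTriangular) {i j : Fin m} (hij : (i : ℕ) = j + 1) :
    (H * U) i j = H i j * U j j := by
  rw [mul_apply]
  refine Finset.sum_eq_single j (fun k _ hkj => ?_) (by simp)
  rcases lt_or_gt_of_ne hkj with h | h
  · rw [hH i k (by rw [Fin.lt_def] at h; omega), zero_mul]
  · rw [hU h, mul_zero]

end Semiring

lemma IsUpperHessenberg.apply_eq_zero_of_isSymm [Zero R] {S : Matrix (Fin m) (Fin m) R}
    (hH : S.IsUpperHessenberg) (hS : S.IsSymm) {i j : Fin m}
    (hij : (i : ℕ) + 1 < j ∨ (j : ℕ) + 1 < i) : S i j = 0 := by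
  rcases hij with h | h
  · rw [← hS.apply i j, hH j i h]
  · exact hH i j h

lemma SubdiagonalPos.upperTriangular_mul_mul {K : Type*} [Field K] [LinearOrder K]
    [IsStrictOrderedRing K] {U H V : Matrix (Fin m) (Fin m) K}
    (hU : U.IsUpperTriangular) (hUpos : ∀ i, 0 < U i i)
    (hH : H.IsUpperHessenberg) (hHpos : H.SubdiagonalPos)
    (hV : V.IsUpperTriangular) (hVpos : ∀ i, 0 < V i i) : (U * H * V).SubdiagonalPos := by
  intro i j hij
  rw [(hH.upperTriangular_mul hU).mul_upperTriangular_apply_subdiag hV hij,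
    hH.upperTriangular_mul_apply_subdiag hU hij]
  exact mul_pos (mul_pos (hUpos i) (hHpos i j hij)) (hVpos j)

end Hessenberg

section Congruence

variable {ι : Type*} [Fintype ι]

lemma isSymm_transpose_mul_mul {R : Type*} [CommSemiring R] (T : Matrix ι ι R)
    {X : Matrix ι ι R} (hX : X.IsSymm) : (Tᵀ * X * T).IsSymm := by
  rw [IsSymm, transpose_mul, transpose_mul, transpose_transpose, hX.eq, Matrix.mul_assoc]

variable [DecidableEq ι]

lemma isSymm_inv_mul_mul {R : Type*} [CommRing R] {T V A : Matrix ι ι R}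
    (hT : Tᵀ * V * T = 1) (hVA : (V * A).IsSymm) : (T⁻¹ * A * T).IsSymm := by
  rw [inv_eq_left_inv hT, Matrix.mul_assoc Tᵀ V A]
  exact isSymm_transpose_mul_mul T hVA

lemma transpose_mul_mul_eq_one_of_transpose_mul_self_eq {R : Type*} [CommRing R]
    {Q U D : Matrix ι ι R} (hU : Uᵀ * U = Qᵀ * D * Q) (hdet : IsUnit U.det) :
    (Q * U⁻¹)ᵀ * D * (Q * U⁻¹) = 1 := by
  calc (Q * U⁻¹)ᵀ * D * (Q * U⁻¹) = U⁻¹ᵀ * (Qᵀ * D * Q) * U⁻¹ := by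
        simp only [transpose_mul, Matrix.mul_assoc]
    _ = (U * U⁻¹)ᵀ * (U * U⁻¹) := by
        rw [← hU]; simp only [transpose_mul, Matrix.mul_assoc]
    _ = 1 := by rw [mul_nonsing_inv _ hdet, transpose_one, Matrix.one_mul]

lemma isSymm_diagonal_mul_compartmental {K : Type*} [Field K] {v : ι → K} (hv : ∀ i, v i ≠ 0)
    {i₀ : ι} (hv0 : v i₀ = 1) {M : Matrix ι ι K} (hM : M.IsSymm) :
    (diagonal v * (-vecMulVec (Pi.single i₀ 1) (Pi.single i₀ 1) - (diagonal v)⁻¹ * M)).IsSymm := by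
  have hdet : IsUnit (diagonal v).det := by
    rw [det_diagonal]
    exact (Finset.prod_ne_zero_iff.mpr fun i _ => hv i).isUnit
  have hB : diagonal v * vecMulVec (Pi.single i₀ 1) (Pi.single i₀ 1)
      = vecMulVec (Pi.single i₀ (1 : K)) (Pi.single i₀ 1) := by
    ext i j
    by_cases h : i = i₀ <;> simp [vecMulVec_apply, h, hv0]
  rw [mul_sub, mul_neg, hB, ← Matrix.mul_assoc, mul_nonsing_inv _ hdet, Matrix.one_mul]
  exact IsSymm.sub (IsSymm.neg (transpose_vecMulVec _ _)) hM

end Congruence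

section Column

variable {ι κ : Type*} [Fintype κ] [DecidableEq ι] {Q : Matrix κ ι ℝ} {a : κ → ℝ} {j : ι}

lemma sqrt_sum_sq_pos_of_col_eq_div (hQ : Qᵀ * Q = 1)
    (hQj : ∀ i, Q i j = a i / √(∑ k, a k ^ 2)) : 0 < √(∑ k, a k ^ 2) := by
  -- A zero norm would make column `j` vanish (as `x / 0 = 0`), contradicting `Qᵀ * Q = 1`.
  refine (Real.sqrt_nonneg _).lt_of_ne fun h0 => ?_
  have hjj := congrFun (congrFun hQ j) j
  simp [mul_apply, hQj, ← h0] at hjj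

lemma transpose_mulVec_eq_single_of_col_eq_div [Fintype ι] (hQ : Qᵀ * Q = 1)
    (hQj : ∀ i, Q i j = a i / √(∑ k, a k ^ 2)) :
    Qᵀ *ᵥ a = Pi.single j √(∑ k, a k ^ 2) := by
  have hs := (sqrt_sum_sq_pos_of_col_eq_div hQ hQj).ne'
  have ha : a = Q *ᵥ Pi.single j √(∑ k, a k ^ 2) := by
    ext i
    simp [mulVec_single, hQj, hs]
  conv_lhs => rw [ha]
  rw [mulVec_mulVec, hQ, one_mulVec]

end Column

end Matrix

lemma lanczos_blockDiag1 {m : ℕ} {A : Matrix (Fin (m + 2)) (Fin (m + 2)) ℝ}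
    {Q : Matrix (Fin (m + 1)) (Fin (m + 1)) ℝ}
    (hΔ : (A.submatrix Fin.succ Fin.succ).IsSymm) (hQ : Qᵀ * Q = 1)
    (hQ0 : ∀ i, Q i 0 = A i.succ 0 / √(∑ j : Fin (m + 1), A j.succ 0 ^ 2))
    (hJ : (Qᵀ * A.submatrix Fin.succ Fin.succ * Q).IsUpperHessenberg)
    (hJpos : ∀ i j : Fin (m + 1), (j : ℕ) = i + 1 →
      0 < (Qᵀ * A.submatrix Fin.succ Fin.succ * Q) i j) :
    (blockDiag1 Qᵀ * A * blockDiag1 Q).IsUpperHessenberg ∧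
      (blockDiag1 Qᵀ * A * blockDiag1 Q).SubdiagonalPos := by
  have hcol := transpose_mulVec_eq_single_of_col_eq_div hQ hQ0
  have hJsymm := isSymm_transpose_mul_mul Q hΔ
  constructor
  · intro i j hij
    cases i using Fin.cases with
    | zero => simp at hij
    | succ i =>
      cases j using Fin.cases with
      | zero =>
        rw [blockDiag1_mul_mul_apply_succ_zero, hcol, Pi.single_eq_of_ne]
        rintro rfl
        simp at hij
      | succ j =>
        rw [blockDiag1_mul_mul_apply_succ_succ]
        exact hJ i j (by simpa using hij)
  · intro i j hij
    cases i using Fin.cases with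
    | zero => simp at hij
    | succ i =>
      cases j using Fin.cases with
      | zero =>
        obtain rfl : i = 0 := Fin.ext (by simpa using hij)
        rw [blockDiag1_mul_mul_apply_succ_zero, hcol, Pi.single_eq_same]
        exact sqrt_sum_sq_pos_of_col_eq_div hQ hQ0
      | succ j =>
        rw [blockDiag1_mul_mul_apply_succ_succ, hJsymm.apply j i]
        exact hJpos j i (by simpa using hij)

theorem mrmt_stmt17_general {n : ℕ} (v : Fin (n + 2) → ℝ)
    (M A : Matrix (Fin (n + 2)) (Fin (n + 2)) ℝ) (B : Fin (n + 2) → ℝ)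
    (hB : B = Pi.single 0 1)
    (hv : ∀ i, 0 < v i) (hv0 : v 0 = 1)
    (hMsym : M.IsSymm)
    (hA : A = -(vecMulVec B B) - (Matrix.diagonal v)⁻¹ * M)
    -- A is MRMT: the lower-right block Ã is diagonal, with distinct negative entries
    (hMRMT : ∀ i j : Fin (n + 1), i ≠ j → A i.succ j.succ = 0)
    -- Q from Lanczos applied to Ã with q₁ = A(2:n,1)/‖A(2:n,1)‖
    (Q : Matrix (Fin (n + 1)) (Fin (n + 1)) ℝ)
    (hQorth : Qᵀ * Q = 1)
    (hQ1 : ∀ i : Fin (n + 1),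
      Q i 0 = A i.succ 0 / Real.sqrt (∑ j : Fin (n + 1), (A j.succ 0) ^ 2))
    (hQtri : ∀ i j : Fin (n + 1), ((i : ℕ) + 1 < (j : ℕ) ∨ (j : ℕ) + 1 < (i : ℕ)) →
      (Qᵀ * A.submatrix Fin.succ Fin.succ * Q) i j = 0)
    (hQpos : ∀ i j : Fin (n + 1), (j : ℕ) = (i : ℕ) + 1 →
      0 < (Qᵀ * A.submatrix Fin.succ Fin.succ * Q) i j)
    -- U is the Cholesky factor of QᵗṼQ
    (U : Matrix (Fin (n + 1)) (Fin (n + 1)) ℝ)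
    (hUtriang : ∀ i j : Fin (n + 1), j < i → U i j = 0)
    (hUdiag : ∀ i, 0 < U i i)
    (hU : Uᵀ * U = Qᵀ * Matrix.diagonal (fun i : Fin (n + 1) => v i.succ) * Q)
    (T : Matrix (Fin (n + 2)) (Fin (n + 2)) ℝ)
    (hT : T = blockDiag1 (Q * U⁻¹)) :
    (T⁻¹ * A * T).IsSymm ∧
    (∀ i j : Fin (n + 2), ((i : ℕ) + 1 < (j : ℕ) ∨ (j : ℕ) + 1 < (i : ℕ)) →
      (T⁻¹ * A * T) i j = 0) ∧
    (∀ i j : Fin (n + 2), (j : ℕ) = (i : ℕ) + 1 →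
      0 < (T⁻¹ * A * T) i j ∧ 0 < (T⁻¹ * A * T) j i) := by
  have hUtri : U.IsUpperTriangular := fun i j => hUtriang i j
  have hUdet := hUtri.isUnit_det hUdiag
  have hUinvtri : U⁻¹.IsUpperTriangular :=
    have := U.invertibleOfIsUnitDet hUdet
    blockTriangular_inv_of_blockTriangular hUtri
  have hsymm : (T⁻¹ * A * T).IsSymm := by
    refine isSymm_inv_mul_mul (V := diagonal v) ?_ ?_
    · rw [hT, diagonal_eq_blockDiag1 hv0, blockDiag1_transpose, blockDiag1_mul, blockDiag1_mul,
        transpose_mul_mul_eq_one_of_transpose_mul_self_eq hU hUdet, blockDiag1_one]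
    · subst hA hB
      exact isSymm_diagonal_mul_compartmental (fun i => (hv i).ne') hv0 hMsym
  have hconj := hT ▸ blockDiag1_inv_mul_mul hQorth hUdet A
  have hΔ : (A.submatrix Fin.succ Fin.succ).IsDiag := fun i j hij => hMRMT i j hij
  obtain ⟨hK, hKpos⟩ :=
    lanczos_blockDiag1 hΔ.isSymm hQorth hQ1 (fun i j h => hQtri i j (Or.inr h)) hQpos
  have hS : (T⁻¹ * A * T).IsUpperHessenberg := hconj ▸
    (hK.upperTriangular_mul (isUpperTriangular_blockDiag1 hUtri)).mul_upperTriangular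
      (isUpperTriangular_blockDiag1 hUinvtri)
  have hSpos : (T⁻¹ * A * T).SubdiagonalPos := hconj ▸
    hKpos.upperTriangular_mul_mul (isUpperTriangular_blockDiag1 hUtri)
      (blockDiag1_apply_self_pos hUdiag) hK (isUpperTriangular_blockDiag1 hUinvtri)
      (blockDiag1_apply_self_pos (hUtri.inv_apply_self_pos hUdiag))
  refine ⟨hsymm, fun i j => hS.apply_eq_zero_of_isSymm hsymm,
    fun i j hij => ⟨?_, hSpos j i hij⟩⟩
  rw [← hsymm.apply]
  exact hSpos j i hij

/-- for a controllable MRMT matrix A, with Q the orthogonal matrix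
produced by the Lanczos algorithm applied to Δ = Ã with initial vector
q₁ = A(2:n,1)/‖A(2:n,1)‖, and U the Cholesky factor of QᵗṼQ, the matrix
T = diag(1, QU⁻¹) makes T⁻¹AT symmetric tridiagonal with positive entries on
the sub- and super-diagonal. -/
theorem mrmt_stmt17 {n : ℕ} (v : Fin (n + 2) → ℝ)
    (M A : Matrix (Fin (n + 2)) (Fin (n + 2)) ℝ) (B : Fin (n + 2) → ℝ)
    (hB : B = Pi.single 0 1)
    (hv : ∀ i, 0 < v i) (hv0 : v 0 = 1)
    (hMsym : M.IsSymm)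
    (hMirr : ∀ i j : Fin (n + 2), i ≠ j → Relation.TransGen (fun a b => M a b ≠ 0) i j)
    (hMdiag : ∀ i, 0 < M i i)
    (hMoff : ∀ i j, i ≠ j → M i j ≤ 0)
    (hMrow : ∀ i, ∑ j, M i j = 0)
    (hA : A = -(vecMulVec B B) - (Matrix.diagonal v)⁻¹ * M)
    -- A is MRMT: the lower-right block Ã is diagonal, with distinct negative entries
    (hMRMT : ∀ i j : Fin (n + 1), i ≠ j → A i.succ j.succ = 0)
    (hlamneg : ∀ i : Fin (n + 1), A i.succ i.succ < 0)
    (hdist : Function.Injective fun i : Fin (n + 1) => A i.succ i.succ)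
    -- (A, B) is controllable
    (hctrb : (Matrix.of fun i (k : Fin (n + 2)) => ((A ^ (k : ℕ)) *ᵥ B) i).rank = n + 2)
    -- Q from Lanczos applied to Ã with q₁ = A(2:n,1)/‖A(2:n,1)‖
    (Q : Matrix (Fin (n + 1)) (Fin (n + 1)) ℝ)
    (hQorth : Qᵀ * Q = 1)
    (hQ1 : ∀ i : Fin (n + 1),
      Q i 0 = A i.succ 0 / Real.sqrt (∑ j : Fin (n + 1), (A j.succ 0) ^ 2))
    (hQtri : ∀ i j : Fin (n + 1), ((i : ℕ) + 1 < (j : ℕ) ∨ (j : ℕ) + 1 < (i : ℕ)) →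
      (Qᵀ * A.submatrix Fin.succ Fin.succ * Q) i j = 0)
    (hQpos : ∀ i j : Fin (n + 1), (j : ℕ) = (i : ℕ) + 1 →
      0 < (Qᵀ * A.submatrix Fin.succ Fin.succ * Q) i j)
    -- U is the Cholesky factor of QᵗṼQ
    (U : Matrix (Fin (n + 1)) (Fin (n + 1)) ℝ)
    (hUtriang : ∀ i j : Fin (n + 1), j < i → U i j = 0)
    (hUdiag : ∀ i, 0 < U i i)
    (hU : Uᵀ * U = Qᵀ * Matrix.diagonal (fun i : Fin (n + 1) => v i.succ) * Q)
    (T : Matrix (Fin (n + 2)) (Fin (n + 2)) ℝ)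
    (hT : T = blockDiag1 (Q * U⁻¹)) :
    (T⁻¹ * A * T).IsSymm ∧
    (∀ i j : Fin (n + 2), ((i : ℕ) + 1 < (j : ℕ) ∨ (j : ℕ) + 1 < (i : ℕ)) →
      (T⁻¹ * A * T) i j = 0) ∧
    (∀ i j : Fin (n + 2), (j : ℕ) = (i : ℕ) + 1 →
      0 < (T⁻¹ * A * T) i j ∧ 0 < (T⁻¹ * A * T) j i) :=
  mrmt_stmt17_general v M A B hB hv hv0 hMsym hA hMRMT Q hQorth hQ1 hQtri hQpos U hUtriang hUdiag hU
    T hT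
end

section
/- For a minimal (controllable and observable) representation (A, B, C) with A an MRMT matrix (whose submatrix Ã is diagonal with entries λᵢ = -d₁ᵢ/Vᵢ), the diagonal entries of Ã are pairwise distinct; equivalently, if two immobile zones have equal ratios d₁ᵢ/Vᵢ = d₁ⱼ/Vⱼ, the representation is not minimal (the system is input-output equivalent to one of dimension n−1 obtained by merging the two zones). -/
open Matrix

/-!
Merging two immobile zones with the same exchange rate `dᵢ/Vᵢ = dⱼ/Vⱼ` is an exact lumping of
the state space: on states that agree on the two zones, `A` acts by a matrix on the quotient,
since the rows of the two zones then coincide as functionals. The Markov parameters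
`e₀ᵀ Aᵏ e₀` are therefore those of an `n`-dimensional system, because the mobile zone is a
singleton fibre of the lumping map.
-/

namespace Matrix

variable {R m n : Type*} [CommSemiring R] [Fintype m] [Fintype n] [DecidableEq n]

def IsLumpable (A : Matrix m m R) (f : m → n) : Prop :=
  ∀ (x : n → R) (p p' : m), f p = f p' → (A *ᵥ (x ∘ f)) p = (A *ᵥ (x ∘ f)) p'

theorem IsLumpable.exists_mulVec_comp {A : Matrix m m R} {f : m → n} (hA : A.IsLumpable f)
    (hf : Function.Surjective f) :
    ∃ A' : Matrix n n R, ∀ x : n → R, A *ᵥ (x ∘ f) = (A' *ᵥ x) ∘ f := by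
  refine ⟨of fun s t => (A *ᵥ (Pi.single t 1 ∘ f)) (Function.surjInv hf s), fun x => ?_⟩
  funext p
  rw [hA x p _ (Function.surjInv_eq hf (f p)).symm]
  simp only [Function.comp_apply, mulVec, dotProduct, of_apply, Pi.single_apply, mul_ite,
    mul_one, mul_zero, Finset.sum_mul, ite_mul, zero_mul]
  rw [Finset.sum_comm]
  simp

theorem pow_mulVec_comp [DecidableEq m] {A : Matrix m m R} {A' : Matrix n n R} {f : m → n}
    (h : ∀ x : n → R, A *ᵥ (x ∘ f) = (A' *ᵥ x) ∘ f) (x : n → R) (k : ℕ) :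
    A ^ k *ᵥ (x ∘ f) = (A' ^ k *ᵥ x) ∘ f := by
  induction k with
  | zero => simp
  | succ k ih => rw [pow_succ', pow_succ', ← mulVec_mulVec, ih, h, mulVec_mulVec]

theorem single_dotProduct_pow_mulVec_single_of_comp [DecidableEq m] {A : Matrix m m R}
    {A' : Matrix n n R} {f : m → n} (h : ∀ x : n → R, A *ᵥ (x ∘ f) = (A' *ᵥ x) ∘ f) {a : m}
    (ha : ∀ p, f p = f a → p = a) (k : ℕ) :
    Pi.single a 1 ⬝ᵥ (A ^ k *ᵥ Pi.single a 1) =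
      Pi.single (f a) 1 ⬝ᵥ (A' ^ k *ᵥ Pi.single (f a) 1) := by
  have hsingle : Pi.single (f a) (1 : R) ∘ f = Pi.single a 1 := by
    funext p
    by_cases hp : p = a
    · simp [hp]
    · simp only [Function.comp_apply, Pi.single_apply, hp, if_false, ite_eq_right_iff]
      exact fun hfp => absurd (ha p hfp) hp
  rw [single_dotProduct, single_dotProduct, ← hsingle, pow_mulVec_comp h, Function.comp_apply]

end Matrix

section MRMT

variable {n : ℕ} {Vv : Fin (n + 1) → ℝ} {d : Fin n → ℝ} {A : Matrix (Fin (n + 1)) (Fin (n + 1)) ℝ}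

theorem mrmt_mulVec_succ (hAi0 : ∀ i : Fin n, A i.succ 0 = d i / Vv i.succ)
    (hAij : ∀ i j : Fin n, A i.succ j.succ = if i = j then -(d i / Vv i.succ) else 0)
    (y : Fin (n + 1) → ℝ) (q : Fin n) :
    (A *ᵥ y) q.succ = d q / Vv q.succ * (y 0 - y q.succ) := by
  simp [mulVec, dotProduct, Fin.sum_univ_succ, hAi0, hAij]
  ring

/-- The lumping map merging immobile zones `i` and `j` into `i`; the freed index `j` is reused
for the mobile zone `0`. -/
def mergeZones (i j : Fin n) : Fin (n + 1) → Fin n :=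
  Fin.cons j (Function.update id j i)

variable {i j : Fin n}

theorem mergeZones_zero : mergeZones i j 0 = j := rfl

theorem mergeZones_succ (q : Fin n) : mergeZones i j q.succ = Function.update id j i q := by
  simp [mergeZones]

theorem eq_zero_of_mergeZones_eq (hij : i ≠ j) {p : Fin (n + 1)}
    (hp : mergeZones i j p = mergeZones i j 0) : p = 0 := by
  refine Fin.cases (fun _ => rfl) (fun q hq => ?_) p hp
  rw [mergeZones_succ, mergeZones_zero] at hq
  by_cases hqj : q = j
  · simp [hqj, hij] at hq
  · simp [hqj] at hq

theorem mergeZones_surjective : Function.Surjective (mergeZones i j) := by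
  intro t
  by_cases htj : t = j
  · exact ⟨0, by simp [mergeZones, htj]⟩
  · exact ⟨t.succ, by simp [mergeZones_succ, htj]⟩

theorem isLumpable_mergeZones (hAi0 : ∀ i : Fin n, A i.succ 0 = d i / Vv i.succ)
    (hAij : ∀ i j : Fin n, A i.succ j.succ = if i = j then -(d i / Vv i.succ) else 0)
    (hij : i ≠ j) (heq : d i / Vv i.succ = d j / Vv j.succ) :
    A.IsLumpable (mergeZones i j) := by
  have hrate : ∀ q, d q / Vv q.succ =
      d (Function.update id j i q) / Vv (Function.update id j i q).succ := by
    intro q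
    by_cases hqj : q = j
    · simp [hqj, heq]
    · simp [hqj]
  have hrow : ∀ (x : Fin n → ℝ) (q : Fin n), (A *ᵥ (x ∘ mergeZones i j)) q.succ =
      d (Function.update id j i q) / Vv (Function.update id j i q).succ *
        (x j - x (Function.update id j i q)) := by
    intro x q
    rw [mrmt_mulVec_succ hAi0 hAij, hrate, Function.comp_apply, Function.comp_apply,
      mergeZones_zero, mergeZones_succ]
  intro x p p' h
  rcases Fin.eq_zero_or_eq_succ p with rfl | ⟨q, rfl⟩
  · rw [eq_zero_of_mergeZones_eq hij h.symm]
  rcases Fin.eq_zero_or_eq_succ p' with rfl | ⟨q', rfl⟩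
  · rw [eq_zero_of_mergeZones_eq hij h]
  rw [mergeZones_succ, mergeZones_succ] at h
  rw [hrow, hrow, h]

end MRMT

theorem mrmt_stmt19_general {n : ℕ}
    (Vv : Fin (n + 1) → ℝ)
    (d : Fin n → ℝ)
    (A : Matrix (Fin (n + 1)) (Fin (n + 1)) ℝ)
    (hAi0 : ∀ i : Fin n, A i.succ 0 = d i / Vv i.succ)
    (hAij : ∀ i j : Fin n, A i.succ j.succ = if i = j then -(d i / Vv i.succ) else 0)
    (i j : Fin n) (hij : i ≠ j)
    (heq : d i / Vv i.succ = d j / Vv j.succ) :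
    ∃ (A' : Matrix (Fin n) (Fin n) ℝ) (B' C' : Fin n → ℝ),
      ∀ k : ℕ,
        dotProduct (Pi.single (0 : Fin (n + 1)) (1 : ℝ))
            ((A ^ k) *ᵥ Pi.single (0 : Fin (n + 1)) (1 : ℝ)) =
          dotProduct C' ((A' ^ k) *ᵥ B') := by
  obtain ⟨A', hA'⟩ :=
    (isLumpable_mergeZones hAi0 hAij hij heq).exists_mulVec_comp mergeZones_surjective
  exact ⟨A', _, _, single_dotProduct_pow_mulVec_single_of_comp hA'
    (fun _ => eq_zero_of_mergeZones_eq hij)⟩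

/-- for an MRMT system, if two immobile zones have equal ratios
d₁ᵢ/Vᵢ = d₁ⱼ/Vⱼ then the representation is not minimal: the system is
input-output equivalent (same Markov parameters C A^k B) to a representation of
dimension n−1. Equivalently, a minimal MRMT representation has pairwise distinct
diagonal entries of Ã. -/
theorem mrmt_stmt19 {n : ℕ} (Q : ℝ) (hQ : 0 < Q)
    (Vv : Fin (n + 1) → ℝ) (hV : ∀ i, 0 < Vv i)
    (d : Fin n → ℝ) (hd : ∀ i, 0 < d i)
    (A : Matrix (Fin (n + 1)) (Fin (n + 1)) ℝ)
    (hA00 : A 0 0 = -(Q / Vv 0) - ∑ i, d i / Vv 0)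
    (hA0i : ∀ i : Fin n, A 0 i.succ = d i / Vv 0)
    (hAi0 : ∀ i : Fin n, A i.succ 0 = d i / Vv i.succ)
    (hAij : ∀ i j : Fin n, A i.succ j.succ = if i = j then -(d i / Vv i.succ) else 0)
    (i j : Fin n) (hij : i ≠ j)
    (heq : d i / Vv i.succ = d j / Vv j.succ) :
    ∃ (A' : Matrix (Fin n) (Fin n) ℝ) (B' C' : Fin n → ℝ),
      ∀ k : ℕ,
        dotProduct (Pi.single (0 : Fin (n + 1)) (1 : ℝ))
            ((A ^ k) *ᵥ Pi.single (0 : Fin (n + 1)) (1 : ℝ)) =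
          dotProduct C' ((A' ^ k) *ᵥ B') :=
  mrmt_stmt19_general Vv d A hAi0 hAij i j hij heq
end
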